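/- arXiv:1012.2490 — 8 statements merged into one kernel-verified Lean document; each statement's English description precedes it below -/
import Mathlib

section
/- (Criterion 1, necessity.) Let n ≥ 3, κ ≠ 0, and m₁,…,m_n > 0. Suppose a polygonal homographic candidate q₁,…,q_n (with size function r and angular function ω) satisfies the equations of motion of the curved n-body problem at every time t of a nonempty open interval I. Then for every t ∈ I one has Δ₁(t) = Δ₂(t) = … = Δ_n(t) and Γ₁(t) = Γ₂(t) = … = Γ_n(t) (equivalently δ₁ = … = δ_n and γ₁ = … = γ_n), and the functions r and ω satisfy on I the scalar equations r̈ = r(1−κr²)ω̇² − κ r ṙ²/(1−κr²) − Δ₁ and r ω̈ + 2 ṙ ω̇ = Γ₁. -/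
open Real Finset

noncomputable section

/-- The sign `σ` of the curvature: `1` for `κ > 0`, `-1` for `κ < 0`. -/
def sgn' (κ : ℝ) : ℝ := if 0 < κ then 1 else -1

/-- The `σ`-dependent inner product `⊙` on `ℝ³`. -/
def odot (σ : ℝ) (a b : ℝ × ℝ × ℝ) : ℝ :=
  a.1 * b.1 + a.2.1 * b.2.1 + σ * (a.2.2 * b.2.2)

/-- The `σ`-dependent cross product `⊗` on `ℝ³`. -/
def otimes (σ : ℝ) (a b : ℝ × ℝ × ℝ) : ℝ × ℝ × ℝ :=
  (a.2.1 * b.2.2 - a.2.2 * b.2.1,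
   a.2.2 * b.1 - a.1 * b.2.2,
   σ * (a.1 * b.2.1 - a.2.1 * b.1))

/-- The equations of motion of the curved `n`-body problem, at time `t`. -/
def curvedEOM (κ : ℝ) {n : ℕ} (m : Fin n → ℝ) (q : Fin n → ℝ → ℝ × ℝ × ℝ) (t : ℝ) : Prop :=
  ∀ i, deriv (deriv (q i)) t =
    (∑ j ∈ univ.erase i,
      (m j * |κ| ^ ((3:ℝ)/2) /
        (sgn' κ - sgn' κ * (κ * odot (sgn' κ) (q i t) (q j t)) ^ 2) ^ ((3:ℝ)/2)) •
        (q j t - (κ * odot (sgn' κ) (q i t) (q j t)) • q i t))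
    - (κ * odot (sgn' κ) (deriv (q i) t) (deriv (q i) t)) • q i t

/-- The polygonal homographic candidate with vertex angles `α`, size function `r`
and angular function `ω`. -/
def polyQ (κ : ℝ) {n : ℕ} (α : Fin n → ℝ) (r ω : ℝ → ℝ) (i : Fin n) (t : ℝ) : ℝ × ℝ × ℝ :=
  (r t * Real.cos (ω t + α i), r t * Real.sin (ω t + α i),
    Real.sqrt (sgn' κ * κ⁻¹ - sgn' κ * (r t) ^ 2))

/-- `c_{ji} = 1 - cos (α_j - α_i)`. -/
def cc {n : ℕ} (α : Fin n → ℝ) (j i : Fin n) : ℝ := 1 - Real.cos (α j - α i)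

/-- `s_{ji} = sin (α_j - α_i)`. -/
def ss {n : ℕ} (α : Fin n → ℝ) (j i : Fin n) : ℝ := Real.sin (α j - α i)

/-- `μ_{ji} = 1 / (c_{ji}^{1/2} (2 - c_{ji} κ r²)^{3/2})`. -/
def muF (κ : ℝ) {n : ℕ} (α : Fin n → ℝ) (r : ℝ → ℝ) (j i : Fin n) (t : ℝ) : ℝ :=
  1 / ((cc α j i) ^ ((1:ℝ)/2) * (2 - cc α j i * κ * (r t) ^ 2) ^ ((3:ℝ)/2))

/-- `ν_{ji} = s_{ji} / (c_{ji}^{3/2} (2 - c_{ji} κ r²)^{3/2})`. -/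
def nuF (κ : ℝ) {n : ℕ} (α : Fin n → ℝ) (r : ℝ → ℝ) (j i : Fin n) (t : ℝ) : ℝ :=
  ss α j i / ((cc α j i) ^ ((3:ℝ)/2) * (2 - cc α j i * κ * (r t) ^ 2) ^ ((3:ℝ)/2))

/-- `δ_i = ∑_{j ≠ i} m_j μ_{ji}`. -/
def deltaF (κ : ℝ) {n : ℕ} (m α : Fin n → ℝ) (r : ℝ → ℝ) (i : Fin n) (t : ℝ) : ℝ :=
  ∑ j ∈ univ.erase i, m j * muF κ α r j i t

/-- `γ_i = ∑_{j ≠ i} m_j ν_{ji}`. -/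
def gammaF (κ : ℝ) {n : ℕ} (m α : Fin n → ℝ) (r : ℝ → ℝ) (i : Fin n) (t : ℝ) : ℝ :=
  ∑ j ∈ univ.erase i, m j * nuF κ α r j i t

/-- `Δ_i = (1 - κ r²) δ_i / r²`. -/
def DeltaF (κ : ℝ) {n : ℕ} (m α : Fin n → ℝ) (r : ℝ → ℝ) (i : Fin n) (t : ℝ) : ℝ :=
  (1 - κ * (r t) ^ 2) * deltaF κ m α r i t / (r t) ^ 2

/-- `Γ_i = γ_i / r²`. -/
def GammaF (κ : ℝ) {n : ℕ} (m α : Fin n → ℝ) (r : ℝ → ℝ) (i : Fin n) (t : ℝ) : ℝ :=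
  gammaF κ m α r i t / (r t) ^ 2


lemma sgn'_mul_self (κ : ℝ) : sgn' κ * sgn' κ = 1 := by unfold sgn'; split <;> norm_num

lemma sgn'_mul_eq_abs {κ : ℝ} (hκ : κ ≠ 0) : sgn' κ * κ = |κ| := by
  unfold sgn'
  rcases hκ.lt_or_gt with h | h
  · rw [if_neg (not_lt.2 h.le), abs_of_neg h]; ring
  · rw [if_pos h, abs_of_pos h]; ring

lemma one_sub_pos' {κ x : ℝ} (hκ : κ ≠ 0) (hlt : 0 < κ → κ * x ^ 2 < 1) :
    0 < 1 - κ * x ^ 2 := by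
  rcases hκ.lt_or_gt with h | h
  · nlinarith [sq_nonneg x]
  · linarith [hlt h]

lemma P_pos' {κ x : ℝ} (hκ : κ ≠ 0) (hx : 0 < x) (hlt : 0 < κ → κ * x ^ 2 < 1) :
    0 < sgn' κ * κ⁻¹ - sgn' κ * x ^ 2 := by
  unfold sgn'
  rcases hκ.lt_or_gt with h | h
  · rw [if_neg (not_lt.2 h.le)]
    have h2 : κ⁻¹ < 0 := inv_neg''.mpr h
    nlinarith [sq_nonneg x]
  · rw [if_pos h]
    have h1 := hlt h
    have h2 : 0 < κ⁻¹ := inv_pos.2 h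
    have h3 : κ * κ⁻¹ = 1 := mul_inv_cancel₀ hκ
    nlinarith [mul_pos h2 (sub_pos.2 h1)]


lemma cc_pos {n : ℕ} {α : Fin n → ℝ} (hmono : StrictMono α)
    (h0 : ∀ i, 0 ≤ α i) (h2 : ∀ i, α i < 2 * π) {i j : Fin n} (hij : j ≠ i) :
    0 < cc α j i := by
  have hne : α j - α i ≠ 0 := sub_ne_zero.2 fun h => hij (hmono.injective h)
  have hb1 : -(2 * π) < α j - α i := by linarith [h0 j, h2 i]
  have hb2 : α j - α i < 2 * π := by linarith [h0 i, h2 j]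
  have hcne : Real.cos (α j - α i) ≠ 1 := fun h =>
    hne ((Real.cos_eq_one_iff_of_lt_of_lt hb1 hb2).mp h)
  have hle := Real.cos_le_one (α j - α i)
  unfold cc
  have := lt_of_le_of_ne hle hcne
  linarith

lemma cc_le_two {n : ℕ} (α : Fin n → ℝ) (j i : Fin n) : cc α j i ≤ 2 := by
  unfold cc; linarith [Real.neg_one_le_cos (α j - α i)]

lemma two_sub_pos' {κ x c : ℝ} (hκ : κ ≠ 0) (hc : 0 < c) (hc2 : c ≤ 2)
    (hlt : 0 < κ → κ * x ^ 2 < 1) : 0 < 2 - c * κ * x ^ 2 := by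
  rcases hκ.lt_or_gt with h | h
  · nlinarith [mul_nonneg hc.le (sq_nonneg x)]
  · nlinarith [hlt h, mul_nonneg hc.le (sq_nonneg x)]

def velP (κ : ℝ) {n : ℕ} (α : Fin n → ℝ) (r ω : ℝ → ℝ) (i : Fin n) (t : ℝ) : ℝ × ℝ × ℝ :=
  (deriv r t * Real.cos (ω t + α i) - r t * deriv ω t * Real.sin (ω t + α i),
   deriv r t * Real.sin (ω t + α i) + r t * deriv ω t * Real.cos (ω t + α i),
   -(sgn' κ * (r t * deriv r t)) / Real.sqrt (sgn' κ * κ⁻¹ - sgn' κ * (r t) ^ 2))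

lemma polyQ_hasDerivAt (κ : ℝ) (hκ : κ ≠ 0) {n : ℕ} (α : Fin n → ℝ) (r ω : ℝ → ℝ)
    (i : Fin n) (t : ℝ)
    (hdr : DifferentiableAt ℝ r t) (hdω : DifferentiableAt ℝ ω t)
    (hr0 : 0 < r t) (hlt : 0 < κ → κ * (r t) ^ 2 < 1) :
    HasDerivAt (polyQ κ α r ω i) (velP κ α r ω i t) t := by
  have hP : 0 < sgn' κ * κ⁻¹ - sgn' κ * (r t) ^ 2 := P_pos' hκ hr0 hlt
  have hβ : HasDerivAt (fun s => ω s + α i) (deriv ω t) t := (hdω.hasDerivAt).add_const _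
  have hx : HasDerivAt (fun s => r s * Real.cos (ω s + α i))
      (deriv r t * Real.cos (ω t + α i) - r t * deriv ω t * Real.sin (ω t + α i)) t := by
    have := (hdr.hasDerivAt).mul hβ.cos
    exact this.congr_deriv (by ring)
  have hy : HasDerivAt (fun s => r s * Real.sin (ω s + α i))
      (deriv r t * Real.sin (ω t + α i) + r t * deriv ω t * Real.cos (ω t + α i)) t := by
    have := (hdr.hasDerivAt).mul hβ.sin
    exact this.congr_deriv (by ring)
  have hin : HasDerivAt (fun s => sgn' κ * κ⁻¹ - sgn' κ * (r s) ^ 2)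
      (-(sgn' κ * ((2:ℕ) * r t ^ 1 * deriv r t))) t := by
    have := ((hdr.hasDerivAt.pow 2).const_mul (sgn' κ))
    have h2 := (hasDerivAt_const t (sgn' κ * κ⁻¹)).sub this
    exact h2.congr_deriv (by ring)
  have hz : HasDerivAt (fun s => Real.sqrt (sgn' κ * κ⁻¹ - sgn' κ * (r s) ^ 2))
      (-(sgn' κ * (r t * deriv r t)) / Real.sqrt (sgn' κ * κ⁻¹ - sgn' κ * (r t) ^ 2)) t := by
    have := hin.sqrt hP.ne'
    convert this using 1
    have hS : Real.sqrt (sgn' κ * κ⁻¹ - sgn' κ * (r t) ^ 2) ≠ 0 := (Real.sqrt_pos.2 hP).ne'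
    field_simp
    ring
  exact hx.prodMk (hy.prodMk hz)

lemma velP_hasDerivAt (κ : ℝ) (hκ : κ ≠ 0) {n : ℕ} (α : Fin n → ℝ) (r ω : ℝ → ℝ)
    (i : Fin n) (t : ℝ)
    (hdr : DifferentiableAt ℝ r t) (hdω : DifferentiableAt ℝ ω t)
    (hdr' : DifferentiableAt ℝ (deriv r) t) (hdω' : DifferentiableAt ℝ (deriv ω) t)
    (hr0 : 0 < r t) (hlt : 0 < κ → κ * (r t) ^ 2 < 1) :
    ∃ D, HasDerivAt (velP κ α r ω i)
      ((deriv (deriv r) t - r t * (deriv ω t) ^ 2) * Real.cos (ω t + α i)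
        - (r t * deriv (deriv ω) t + 2 * deriv r t * deriv ω t) * Real.sin (ω t + α i),
       (deriv (deriv r) t - r t * (deriv ω t) ^ 2) * Real.sin (ω t + α i)
        + (r t * deriv (deriv ω) t + 2 * deriv r t * deriv ω t) * Real.cos (ω t + α i),
       D) t := by
  have hP : 0 < sgn' κ * κ⁻¹ - sgn' κ * (r t) ^ 2 := P_pos' hκ hr0 hlt
  have hβ : HasDerivAt (fun s => ω s + α i) (deriv ω t) t := (hdω.hasDerivAt).add_const _
  have hx : HasDerivAt (fun s => deriv r s * Real.cos (ω s + α i)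
        - r s * deriv ω s * Real.sin (ω s + α i))
      ((deriv (deriv r) t - r t * (deriv ω t) ^ 2) * Real.cos (ω t + α i)
        - (r t * deriv (deriv ω) t + 2 * deriv r t * deriv ω t) * Real.sin (ω t + α i)) t := by
    have h1 := (hdr'.hasDerivAt).mul hβ.cos
    have h2 := ((hdr.hasDerivAt.mul hdω'.hasDerivAt).mul hβ.sin)
    have := h1.sub h2
    exact this.congr_deriv (by simp only [Pi.mul_apply]; ring)
  have hy : HasDerivAt (fun s => deriv r s * Real.sin (ω s + α i)
        + r s * deriv ω s * Real.cos (ω s + α i))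
      ((deriv (deriv r) t - r t * (deriv ω t) ^ 2) * Real.sin (ω t + α i)
        + (r t * deriv (deriv ω) t + 2 * deriv r t * deriv ω t) * Real.cos (ω t + α i)) t := by
    have h1 := (hdr'.hasDerivAt).mul hβ.sin
    have h2 := ((hdr.hasDerivAt.mul hdω'.hasDerivAt).mul hβ.cos)
    have := h1.add h2
    exact this.congr_deriv (by simp only [Pi.mul_apply]; ring)
  have hzdiff : DifferentiableAt ℝ
      (fun s => -(sgn' κ * (r s * deriv r s)) / Real.sqrt (sgn' κ * κ⁻¹ - sgn' κ * (r s) ^ 2)) t := by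
    have hnum : DifferentiableAt ℝ (fun s => -(sgn' κ * (r s * deriv r s))) t :=
      ((hdr.mul hdr').const_mul _).neg
    have hden : DifferentiableAt ℝ (fun s => Real.sqrt (sgn' κ * κ⁻¹ - sgn' κ * (r s) ^ 2)) t :=
      DifferentiableAt.sqrt ((differentiableAt_const _).sub ((hdr.pow 2).const_mul _)) hP.ne'
    exact hnum.div hden (Real.sqrt_pos.2 hP).ne'
  exact ⟨_, hx.prodMk (hy.prodMk hzdiff.hasDerivAt)⟩


lemma sq_rpow_three_halves {x : ℝ} (hx : 0 ≤ x) : (x^2) ^ ((3:ℝ)/2) = x^3 := by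
  rw [← Real.rpow_natCast x 2, ← Real.rpow_mul hx]
  norm_num

/-- **Criterion 1, necessity.** If a polygonal homographic candidate satisfies the
equations of motion of the curved `n`-body problem on a nonempty open interval, then
`Δ₁ = Δ₂ = ⋯ = Δ_n` and `Γ₁ = Γ₂ = ⋯ = Γ_n` (equivalently `δ₁ = ⋯ = δ_n` and
`γ₁ = ⋯ = γ_n`) there, and `r`, `ω` satisfy the scalar equations
`r̈ = r(1-κr²)ω̇² - κ r ṙ²/(1-κr²) - Δ₁` and `r ω̈ + 2 ṙ ω̇ = Γ₁`. -/
theorem criterion_necessity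
    (n : ℕ) (hn : 3 ≤ n) (κ : ℝ) (hκ : κ ≠ 0)
    (m : Fin n → ℝ) (hm : ∀ i, 0 < m i)
    (α : Fin n → ℝ) (hmono : StrictMono α) (hα0 : ∀ i, 0 ≤ α i) (hα2π : ∀ i, α i < 2 * π)
    (r ω : ℝ → ℝ) (a b : ℝ) (hab : a < b)
    (hr : ∀ t ∈ Set.Ioo a b, 0 < r t)
    (hreq : ∀ t ∈ Set.Ioo a b, 0 < κ → κ * (r t) ^ 2 < 1)
    (hdr : ∀ t ∈ Set.Ioo a b, DifferentiableAt ℝ r t ∧ DifferentiableAt ℝ (deriv r) t)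
    (hdω : ∀ t ∈ Set.Ioo a b, DifferentiableAt ℝ ω t ∧ DifferentiableAt ℝ (deriv ω) t)
    (heom : ∀ t ∈ Set.Ioo a b, curvedEOM κ m (polyQ κ α r ω) t) :
    ∀ t ∈ Set.Ioo a b,
      (∀ i j : Fin n, DeltaF κ m α r i t = DeltaF κ m α r j t) ∧
      (∀ i j : Fin n, GammaF κ m α r i t = GammaF κ m α r j t) ∧
      (∀ i j : Fin n, deltaF κ m α r i t = deltaF κ m α r j t) ∧
      (∀ i j : Fin n, gammaF κ m α r i t = gammaF κ m α r j t) ∧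
      deriv (deriv r) t =
        r t * (1 - κ * (r t) ^ 2) * (deriv ω t) ^ 2
          - κ * r t * (deriv r t) ^ 2 / (1 - κ * (r t) ^ 2)
          - DeltaF κ m α r ⟨0, by omega⟩ t ∧
      r t * deriv (deriv ω) t + 2 * deriv r t * deriv ω t = GammaF κ m α r ⟨0, by omega⟩ t := by
  intro t ht
  have hr0 := hr t ht
  have hrne : r t ≠ 0 := hr0.ne'
  have h1κ : 0 < 1 - κ * (r t) ^ 2 := one_sub_pos' hκ (hreq t ht)
  have hP : 0 < sgn' κ * κ⁻¹ - sgn' κ * (r t) ^ 2 := P_pos' hκ hr0 (hreq t ht)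
  have hκκ : κ * κ⁻¹ = 1 := mul_inv_cancel₀ hκ
  have hσσ := sgn'_mul_self κ
  have hσκ := sgn'_mul_eq_abs hκ
  have habs : (0:ℝ) < |κ| ^ ((3:ℝ)/2) := Real.rpow_pos_of_pos (abs_pos.2 hκ) _
  have hv : ∀ (i : Fin n) (s : ℝ), s ∈ Set.Ioo a b →
      HasDerivAt (polyQ κ α r ω i) (velP κ α r ω i s) s := fun i s hs =>
    polyQ_hasDerivAt κ hκ α r ω i s (hdr s hs).1 (hdω s hs).1 (hr s hs) (hreq s hs)
  have hO : ∀ i j : Fin n,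
      κ * odot (sgn' κ) (polyQ κ α r ω i t) (polyQ κ α r ω j t)
        = 1 - cc α j i * κ * (r t) ^ 2 := by
    intro i j
    simp only [polyQ, odot]
    rw [Real.mul_self_sqrt hP.le, cc,
        show α j - α i = (ω t + α j) - (ω t + α i) by ring, Real.cos_sub]
    linear_combination (κ * κ⁻¹ - κ * (r t) ^ 2) * hσσ + hκκ
  have hden : ∀ j i : Fin n, 0 < cc α j i →
      (sgn' κ - sgn' κ * (1 - cc α j i * κ * (r t) ^ 2) ^ 2) ^ ((3:ℝ)/2)
        = |κ| ^ ((3:ℝ)/2) * ((cc α j i) ^ ((3:ℝ)/2)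
            * ((r t) ^ 3 * (2 - cc α j i * κ * (r t) ^ 2) ^ ((3:ℝ)/2))) := by
    intro j i hc
    have h2E : 0 < 2 - cc α j i * κ * (r t) ^ 2 :=
      two_sub_pos' hκ hc (cc_le_two α j i) (hreq t ht)
    have hb : sgn' κ - sgn' κ * (1 - cc α j i * κ * (r t) ^ 2) ^ 2
        = |κ| * (cc α j i * ((r t) ^ 2 * (2 - cc α j i * κ * (r t) ^ 2))) := by
      rw [← hσκ]; ring
    rw [hb, Real.mul_rpow (abs_nonneg κ) (by positivity),
        Real.mul_rpow hc.le (by positivity),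
        Real.mul_rpow (by positivity) h2E.le, sq_rpow_three_halves hr0.le]
  have key : ∀ i : Fin n,
      deriv (deriv r) t - r t * (deriv ω t) ^ 2
          = -(DeltaF κ m α r i t)
            - (κ * (deriv r t) ^ 2 + κ * (r t) ^ 2 * (deriv ω t) ^ 2
               + κ ^ 2 * (r t) ^ 2 * (deriv r t) ^ 2 / (1 - κ * (r t) ^ 2)) * r t
        ∧ r t * deriv (deriv ω) t + 2 * deriv r t * deriv ω t = GammaF κ m α r i t := by
    intro i
    obtain ⟨D, hD⟩ := velP_hasDerivAt κ hκ α r ω i t (hdr t ht).1 (hdω t ht).1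
      (hdr t ht).2 (hdω t ht).2 hr0 (hreq t ht)
    have hev : deriv (polyQ κ α r ω i) =ᶠ[nhds t] velP κ α r ω i :=
      Filter.eventuallyEq_of_mem (Ioo_mem_nhds ht.1 ht.2) fun s hs => (hv i s hs).deriv
    have hdd := hev.deriv_eq.trans hD.deriv
    have heqi := heom t ht i
    rw [hdd, (hv i t ht).deriv] at heqi
    have h1 := congrArg Prod.fst heqi
    have h2 := congrArg (fun p : ℝ × ℝ × ℝ => p.2.1) heqi
    dsimp only at h1 h2
    simp only [Prod.fst_sub, Prod.fst_sum, Prod.smul_fst, smul_eq_mul,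
      Prod.snd_sub, Prod.snd_sum, Prod.smul_snd] at h1 h2
    have hsum1 : ∑ j ∈ univ.erase i,
        m j * |κ| ^ ((3:ℝ)/2) /
            (sgn' κ - sgn' κ * (κ * odot (sgn' κ) (polyQ κ α r ω i t) (polyQ κ α r ω j t)) ^ 2) ^ ((3:ℝ)/2) *
          ((polyQ κ α r ω j t).1 - κ * odot (sgn' κ) (polyQ κ α r ω i t) (polyQ κ α r ω j t) * (polyQ κ α r ω i t).1)
        = -((1 - κ * (r t) ^ 2) * Real.cos (ω t + α i)) / (r t) ^ 2 * deltaF κ m α r i t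
          + -Real.sin (ω t + α i) / (r t) ^ 2 * gammaF κ m α r i t := by
      rw [deltaF, gammaF, Finset.mul_sum, Finset.mul_sum, ← Finset.sum_add_distrib]
      refine Finset.sum_congr rfl fun j hj => ?_
      have hij : j ≠ i := Finset.ne_of_mem_erase hj
      have hc : 0 < cc α j i := cc_pos hmono hα0 hα2π hij
      have h2E : 0 < 2 - cc α j i * κ * (r t) ^ 2 :=
        two_sub_pos' hκ hc (cc_le_two α j i) (hreq t ht)
      have hc12 : (0:ℝ) < (cc α j i) ^ ((1:ℝ)/2) := Real.rpow_pos_of_pos hc _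
      have h2E32 : (0:ℝ) < (2 - cc α j i * κ * (r t) ^ 2) ^ ((3:ℝ)/2) :=
        Real.rpow_pos_of_pos h2E _
      have hc32 : (cc α j i) ^ ((3:ℝ)/2) = cc α j i * (cc α j i) ^ ((1:ℝ)/2) := by
        rw [show (3:ℝ)/2 = 1 + 1/2 by norm_num, Real.rpow_add hc, Real.rpow_one]
      rw [hO i j, hden j i hc, muF, nuF, hc32]
      simp only [polyQ]
      rw [show ω t + α j = (ω t + α i) + (α j - α i) by ring, Real.cos_add,
        show Real.cos (α j - α i) = 1 - cc α j i by rw [cc]; ring,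
        show Real.sin (α j - α i) = ss α j i from rfl]
      field_simp
      ring
    have hsum2 : ∑ j ∈ univ.erase i,
        m j * |κ| ^ ((3:ℝ)/2) /
            (sgn' κ - sgn' κ * (κ * odot (sgn' κ) (polyQ κ α r ω i t) (polyQ κ α r ω j t)) ^ 2) ^ ((3:ℝ)/2) *
          ((polyQ κ α r ω j t).2.1 - κ * odot (sgn' κ) (polyQ κ α r ω i t) (polyQ κ α r ω j t) * (polyQ κ α r ω i t).2.1)
        = -((1 - κ * (r t) ^ 2) * Real.sin (ω t + α i)) / (r t) ^ 2 * deltaF κ m α r i t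
          + Real.cos (ω t + α i) / (r t) ^ 2 * gammaF κ m α r i t := by
      rw [deltaF, gammaF, Finset.mul_sum, Finset.mul_sum, ← Finset.sum_add_distrib]
      refine Finset.sum_congr rfl fun j hj => ?_
      have hij : j ≠ i := Finset.ne_of_mem_erase hj
      have hc : 0 < cc α j i := cc_pos hmono hα0 hα2π hij
      have h2E : 0 < 2 - cc α j i * κ * (r t) ^ 2 :=
        two_sub_pos' hκ hc (cc_le_two α j i) (hreq t ht)
      have hc12 : (0:ℝ) < (cc α j i) ^ ((1:ℝ)/2) := Real.rpow_pos_of_pos hc _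
      have h2E32 : (0:ℝ) < (2 - cc α j i * κ * (r t) ^ 2) ^ ((3:ℝ)/2) :=
        Real.rpow_pos_of_pos h2E _
      have hc32 : (cc α j i) ^ ((3:ℝ)/2) = cc α j i * (cc α j i) ^ ((1:ℝ)/2) := by
        rw [show (3:ℝ)/2 = 1 + 1/2 by norm_num, Real.rpow_add hc, Real.rpow_one]
      rw [hO i j, hden j i hc, muF, nuF, hc32]
      simp only [polyQ]
      rw [show ω t + α j = (ω t + α i) + (α j - α i) by ring, Real.sin_add,
        show Real.cos (α j - α i) = 1 - cc α j i by rw [cc]; ring,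
        show Real.sin (α j - α i) = ss α j i from rfl]
      field_simp
      ring
    have hF : κ * odot (sgn' κ) (velP κ α r ω i t) (velP κ α r ω i t)
        = κ * (deriv r t) ^ 2 + κ * (r t) ^ 2 * (deriv ω t) ^ 2
          + κ ^ 2 * (r t) ^ 2 * (deriv r t) ^ 2 / (1 - κ * (r t) ^ 2) := by
      have hzterm : sgn' κ * (-(sgn' κ * (r t * deriv r t)) * -(sgn' κ * (r t * deriv r t))
            / (sgn' κ * κ⁻¹ - sgn' κ * (r t) ^ 2))
          = κ * ((r t) ^ 2 * (deriv r t) ^ 2) / (1 - κ * (r t) ^ 2) := by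
        rw [← mul_div_assoc, div_eq_div_iff hP.ne' h1κ.ne']
        linear_combination (sgn' κ * (1 - κ * (r t) ^ 2) * (r t) ^ 2 * (deriv r t) ^ 2) * hσσ
          - (sgn' κ * (r t) ^ 2 * (deriv r t) ^ 2) * hκκ
      have hpy := Real.sin_sq_add_cos_sq (ω t + α i)
      simp only [velP, odot]
      rw [div_mul_div_comm, Real.mul_self_sqrt hP.le, hzterm]
      field_simp
      linear_combination ((1 - κ * (r t) ^ 2) * ((deriv r t) ^ 2 + (r t) ^ 2 * (deriv ω t) ^ 2)) * hpy
    rw [hsum1, hF] at h1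
    rw [hsum2, hF] at h2
    simp only [polyQ] at h1 h2
    have hpy := Real.sin_sq_add_cos_sq (ω t + α i)
    constructor
    · rw [show DeltaF κ m α r i t
          = (1 - κ * (r t) ^ 2) * deltaF κ m α r i t / (r t) ^ 2 from rfl]
      linear_combination Real.cos (ω t + α i) * h1 + Real.sin (ω t + α i) * h2
        - (deriv (deriv r) t - r t * (deriv ω t) ^ 2
            + (1 - κ * (r t) ^ 2) * deltaF κ m α r i t / (r t) ^ 2
            + (κ * (deriv r t) ^ 2 + κ * (r t) ^ 2 * (deriv ω t) ^ 2
               + κ ^ 2 * (r t) ^ 2 * (deriv r t) ^ 2 / (1 - κ * (r t) ^ 2)) * r t) * hpy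
    · rw [show GammaF κ m α r i t = gammaF κ m α r i t / (r t) ^ 2 from rfl]
      linear_combination (-Real.sin (ω t + α i)) * h1 + Real.cos (ω t + α i) * h2
        - (r t * deriv (deriv ω) t + 2 * deriv r t * deriv ω t
            - gammaF κ m α r i t / (r t) ^ 2) * hpy
  have hDel : ∀ i : Fin n, DeltaF κ m α r i t
      = r t * (deriv ω t) ^ 2 - deriv (deriv r) t
        - (κ * (deriv r t) ^ 2 + κ * (r t) ^ 2 * (deriv ω t) ^ 2
           + κ ^ 2 * (r t) ^ 2 * (deriv r t) ^ 2 / (1 - κ * (r t) ^ 2)) * r t := by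
    intro i
    have := (key i).1
    linarith
  have hGam : ∀ i : Fin n, GammaF κ m α r i t
      = r t * deriv (deriv ω) t + 2 * deriv r t * deriv ω t := fun i => ((key i).2).symm
  refine ⟨fun i j => by rw [hDel i, hDel j], fun i j => by rw [hGam i, hGam j], ?_, ?_, ?_, ?_⟩
  · intro i j
    have h := (hDel i).trans (hDel j).symm
    rw [show DeltaF κ m α r i t
        = (1 - κ * (r t) ^ 2) * deltaF κ m α r i t / (r t) ^ 2 from rfl,
      show DeltaF κ m α r j t
        = (1 - κ * (r t) ^ 2) * deltaF κ m α r j t / (r t) ^ 2 from rfl,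
      div_eq_div_iff (by positivity) (by positivity)] at h
    have h' := mul_right_cancel₀ (pow_ne_zero 2 hrne) h
    exact mul_left_cancel₀ h1κ.ne' h'
  · intro i j
    have h := (hGam i).trans (hGam j).symm
    rw [show GammaF κ m α r i t = gammaF κ m α r i t / (r t) ^ 2 from rfl,
      show GammaF κ m α r j t = gammaF κ m α r j t / (r t) ^ 2 from rfl,
      div_eq_div_iff (by positivity) (by positivity)] at h
    exact mul_right_cancel₀ (pow_ne_zero 2 hrne) h
  · rw [hDel _]
    have h1κ' : 1 - r t ^ 2 * κ ≠ 0 := by nlinarith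
    field_simp
    ring
  · exact (hGam _).symm
end
end

section
/- (Theorem: relative equilibria of equal masses at any regular n-gon.) Let n ≥ 3, κ ≠ 0, m > 0 and ρ > 0 with κρ² < 1. Put σ = 1 if κ > 0 and σ = −1 if κ < 0, and z₀ = √(σκ^{-1} − σρ²). Then there exists Ω ≠ 0 such that the curves q_i(t) = (ρ cos(Ωt + 2π(i−1)/n), ρ sin(Ωt + 2π(i−1)/n), z₀), i = 1,…,n, with all masses equal to m, satisfy the equations of motion of the curved n-body problem for every t ∈ ℝ; i.e., the regular n-gon of equal masses yields a relative equilibrium. -/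
open Real Finset

noncomputable section

/-! ### Auxiliary lemmas for the proof -/

private lemma cos_zmod' {n : ℕ} (hn : (n:ℝ) ≠ 0) {a b : ℤ} (h : a ≡ b [ZMOD (n:ℤ)]) :
    Real.cos (2*π*(a:ℝ)/(n:ℝ)) = Real.cos (2*π*(b:ℝ)/(n:ℝ)) := by
  obtain ⟨k, hk⟩ := h.dvd
  have hb : (b:ℝ) = (a:ℝ) + (n:ℝ)*(k:ℝ) := by
    have : (b:ℤ) = a + n*k := by linarith
    exact_mod_cast congrArg (Int.cast : ℤ → ℝ) this
  have h2 : 2*π*(b:ℝ)/(n:ℝ) = 2*π*(a:ℝ)/(n:ℝ) + (k:ℤ)*(2*π) := by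
    field_simp [hb]; linarith [hb]
  rw [h2, Real.cos_add_int_mul_two_pi]

private lemma sin_zmod' {n : ℕ} (hn : (n:ℝ) ≠ 0) {a b : ℤ} (h : a ≡ b [ZMOD (n:ℤ)]) :
    Real.sin (2*π*(a:ℝ)/(n:ℝ)) = Real.sin (2*π*(b:ℝ)/(n:ℝ)) := by
  obtain ⟨k, hk⟩ := h.dvd
  have hb : (b:ℝ) = (a:ℝ) + (n:ℝ)*(k:ℝ) := by
    have : (b:ℤ) = a + n*k := by linarith
    exact_mod_cast congrArg (Int.cast : ℤ → ℝ) this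
  have h2 : 2*π*(b:ℝ)/(n:ℝ) = 2*π*(a:ℝ)/(n:ℝ) + (k:ℤ)*(2*π) := by
    field_simp [hb]; linarith [hb]
  rw [h2, Real.sin_add_int_mul_two_pi]

private lemma coe_sub_zmod' {n : ℕ} [NeZero n] (j i : Fin n) :
    (((j - i : Fin n) : ℕ) : ℤ) ≡ ((j:ℕ):ℤ) - ((i:ℕ):ℤ) [ZMOD (n:ℤ)] := by
  have h1 : (((j - i : Fin n) : ℕ) : ℤ) = ((n:ℤ) - (i:ℕ) + (j:ℕ)) % (n:ℤ) := by
    rw [Fin.coe_sub]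
    push_cast [Nat.cast_sub i.isLt.le]
    ring_nf
  rw [h1]
  exact (Int.emod_emod_of_dvd _ dvd_rfl).trans (Int.modEq_iff_dvd.mpr ⟨-1, by ring⟩)

/-- The basic radial kernel, as a function of a cosine value. -/
def Fc (κ ρ c : ℝ) : ℝ := (ρ^2*(1-c)*(2 - κ*ρ^2*(1-c)))^(-(3:ℝ)/2)

/-- Summand for the `δ`-type sum. -/
def Wt (κ ρ mm : ℝ) (nn : ℕ) (d : ℤ) : ℝ :=
  mm * ((1 - Real.cos (2*π*(d:ℝ)/nn)) * Fc κ ρ (Real.cos (2*π*(d:ℝ)/nn)))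

/-- Summand for the `γ`-type sum. -/
def Vt (κ ρ mm : ℝ) (nn : ℕ) (d : ℤ) : ℝ :=
  mm * (Real.sin (2*π*(d:ℝ)/nn) * Fc κ ρ (Real.cos (2*π*(d:ℝ)/nn)))

private lemma Wt_congr {κ ρ mm : ℝ} {nn : ℕ} (hn : (nn:ℝ) ≠ 0) {d e : ℤ}
    (h : d ≡ e [ZMOD (nn:ℤ)]) : Wt κ ρ mm nn d = Wt κ ρ mm nn e := by
  unfold Wt; rw [cos_zmod' hn h]

private lemma Vt_congr {κ ρ mm : ℝ} {nn : ℕ} (hn : (nn:ℝ) ≠ 0) {d e : ℤ}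
    (h : d ≡ e [ZMOD (nn:ℤ)]) : Vt κ ρ mm nn d = Vt κ ρ mm nn e := by
  unfold Vt; rw [cos_zmod' hn h, sin_zmod' hn h]

private lemma Vt_neg (κ ρ mm : ℝ) (nn : ℕ) (d : ℤ) :
    Vt κ ρ mm nn (-d) = - Vt κ ρ mm nn d := by
  unfold Vt
  rw [show 2*π*((-d:ℤ):ℝ)/nn = -(2*π*(d:ℝ)/nn) by push_cast; ring,
    Real.cos_neg, Real.sin_neg]
  ring

/-- **Relative equilibria of equal masses at any regular `n`-gon.** For any `n ≥ 3`,
`κ ≠ 0`, mass `m > 0` and radius `ρ > 0` with `κρ² < 1`, there exists `Ω ≠ 0` such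
that the uniformly rotating regular `n`-gon of equal masses `m`, at height
`z₀ = √(σκ⁻¹ - σρ²)`, satisfies the equations of motion of the curved `n`-body
problem for all time. -/
theorem regular_ngon_relative_equilibrium
    (n : ℕ) (hn : 3 ≤ n) (κ : ℝ) (hκ : κ ≠ 0)
    (m ρ : ℝ) (hm : 0 < m) (hρ : 0 < ρ) (hκρ : κ * ρ ^ 2 < 1) :
    ∃ Ω : ℝ, Ω ≠ 0 ∧ ∀ t : ℝ,
      curvedEOM κ (fun _ : Fin n => m)
        (fun (i : Fin n) (s : ℝ) =>
          (ρ * Real.cos (Ω * s + 2 * π * (i : ℕ) / n),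
           ρ * Real.sin (Ω * s + 2 * π * (i : ℕ) / n),
           Real.sqrt (sgn' κ * κ⁻¹ - sgn' κ * ρ ^ 2))) t := by
  haveI : NeZero n := ⟨by omega⟩
  have hnR : (n:ℝ) ≠ 0 := Nat.cast_ne_zero.mpr (by omega)
  have habs : (0:ℝ) < |κ| := abs_pos.mpr hκ
  have hσ1 : sgn' κ = 1 ∨ sgn' κ = -1 := by unfold sgn'; split_ifs <;> simp
  have hσ2 : sgn' κ * sgn' κ = 1 := by rcases hσ1 with h|h <;> rw [h] <;> norm_num
  have hσκ : sgn' κ * κ = |κ| := by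
    unfold sgn'
    rcases lt_or_gt_of_ne hκ with h|h
    · rw [if_neg (not_lt.mpr h.le), abs_of_neg h]; ring
    · rw [if_pos h, abs_of_pos h]; ring
  have hκinv : κ * κ⁻¹ = 1 := mul_inv_cancel₀ hκ
  have hargpos : 0 < sgn' κ * κ⁻¹ - sgn' κ * ρ^2 := by
    have hz2 : (sgn' κ * κ⁻¹ - sgn' κ * ρ^2) * |κ| = 1 - κ*ρ^2 := by
      rw [← hσκ]
      linear_combination (κ⁻¹*κ - ρ^2*κ)*hσ2 + hκinv
    nlinarith [hz2, habs, hκρ]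
  have hXpos : ∀ c:ℝ, -1 ≤ c → c < 1 → 0 < ρ^2*(1-c)*(2 - κ*ρ^2*(1-c)) := by
    intro c h1 h2
    have hu : 0 < 1 - c := by linarith
    have h3 : κ*ρ^2*(1-c) < 2 := by
      rcases le_or_gt (κ*ρ^2) 0 with hk|hk
      · nlinarith
      · nlinarith
    exact mul_pos (mul_pos (pow_pos hρ 2) hu) (by linarith)
  have hFpos : ∀ c:ℝ, -1 ≤ c → c < 1 → 0 < Fc κ ρ c :=
    fun c h1 h2 => Real.rpow_pos_of_pos (hXpos c h1 h2) _
  have hcoslt : ∀ a : ℤ, ¬ ((n:ℤ) ∣ a) → Real.cos (2*π*(a:ℝ)/n) < 1 := by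
    intro a ha
    refine lt_of_le_of_ne (Real.cos_le_one _) ?_
    intro hc
    obtain ⟨k, hk⟩ := (Real.cos_eq_one_iff _).mp hc
    apply ha
    have h2π : (2*π) ≠ 0 := by positivity
    have h3 : (k:ℝ)*(2*π)*n = 2*π*a := by rw [hk]; field_simp
    have h4 : (k:ℝ)*n = a := by
      apply mul_left_cancel₀ h2π
      linear_combination h3
    have h5 : (k:ℤ)*n = a := by exact_mod_cast h4
    exact ⟨k, by linarith [h5]⟩
  have hdvd : ∀ (i j : Fin n), j ≠ i → ¬ ((n:ℤ) ∣ ((j:ℕ):ℤ) - ((i:ℕ):ℤ)) := by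
    intro i j hne hdv
    have hi := i.isLt; have hj := j.isLt
    have h0 : ((j:ℕ):ℤ) - ((i:ℕ):ℤ) = 0 := by
      refine Int.eq_zero_of_abs_lt_dvd hdv ?_
      rw [abs_lt]
      constructor <;> [omega; omega]
    exact hne (Fin.val_injective (by omega))
  set S : ℝ := ∑ j ∈ univ.erase (0:Fin n), Wt κ ρ m n ((j:ℕ):ℤ) with hSdef
  have hWV : ∀ (i j : Fin n), j ≠ i → -1 ≤ Real.cos (2*π*((((j:ℕ):ℤ) - ((i:ℕ):ℤ) : ℤ):ℝ)/n)
      ∧ Real.cos (2*π*((((j:ℕ):ℤ) - ((i:ℕ):ℤ) : ℤ):ℝ)/n) < 1 :=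
    fun i j hne => ⟨Real.neg_one_le_cos _, hcoslt _ (hdvd i j hne)⟩
  have hSpos : 0 < S := by
    rw [hSdef]
    apply Finset.sum_pos
    · intro j hj
      have hjne := (Finset.mem_erase.mp hj).1
      have h := hWV 0 j hjne
      simp only [Fin.val_zero, Int.ofNat_zero, Int.cast_zero, sub_zero,
        Nat.cast_zero] at h
      unfold Wt
      exact mul_pos hm (mul_pos (by linarith [h.2]) (hFpos _ h.1 h.2))
    · refine ⟨1, Finset.mem_erase.mpr ⟨?_, Finset.mem_univ _⟩⟩
      have h1 : ((1:Fin n):ℕ) = 1 := by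
        rw [Fin.val_one']
        exact Nat.mod_eq_of_lt (by omega)
      intro hcon
      rw [hcon] at h1
      simp at h1
  set Ω := Real.sqrt S with hΩdef
  have hΩ2 : Ω^2 = S := Real.sq_sqrt hSpos.le
  have hΩne : Ω ≠ 0 := ne_of_gt (Real.sqrt_pos.mpr hSpos)
  refine ⟨Ω, hΩne, ?_⟩
  intro t
  simp only [curvedEOM]
  intro i
  -- notation
  set z0 := Real.sqrt (sgn' κ * κ⁻¹ - sgn' κ * ρ ^ 2) with hz0def
  have hzz : z0*z0 = sgn' κ * κ⁻¹ - sgn' κ * ρ^2 := by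
    rw [← sq]; exact Real.sq_sqrt hargpos.le
  -- first derivative
  have hD1 : ∀ b : ℝ, (deriv fun s => (ρ * Real.cos (Ω*s+b), ρ * Real.sin (Ω*s+b), z0))
      = fun s => (-(ρ*Ω) * Real.sin (Ω*s+b), ρ*Ω * Real.cos (Ω*s+b), (0:ℝ)) := by
    intro b
    funext s
    have h0 : HasDerivAt (fun s : ℝ => Ω*s+b) Ω s := by
      simpa using ((hasDerivAt_id s).const_mul Ω).add_const b
    have hc : HasDerivAt (fun s : ℝ => ρ * Real.cos (Ω*s+b)) (-(ρ*Ω) * Real.sin (Ω*s+b)) s := by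
      have := (h0.cos).const_mul ρ
      exact this.congr_deriv (by ring)
    have hs : HasDerivAt (fun s : ℝ => ρ * Real.sin (Ω*s+b)) (ρ*Ω * Real.cos (Ω*s+b)) s := by
      have := (h0.sin).const_mul ρ
      exact this.congr_deriv (by ring)
    exact (hc.prodMk (hs.prodMk (hasDerivAt_const s z0))).deriv
  have hD2 : ∀ b : ℝ,
      (deriv fun s => (-(ρ*Ω) * Real.sin (Ω*s+b), ρ*Ω * Real.cos (Ω*s+b), (0:ℝ)))
      = fun s => (-(ρ*Ω*Ω) * Real.cos (Ω*s+b), -(ρ*Ω*Ω) * Real.sin (Ω*s+b), (0:ℝ)) := by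
    intro b
    funext s
    have h0 : HasDerivAt (fun s : ℝ => Ω*s+b) Ω s := by
      simpa using ((hasDerivAt_id s).const_mul Ω).add_const b
    have hc : HasDerivAt (fun s : ℝ => -(ρ*Ω) * Real.sin (Ω*s+b)) (-(ρ*Ω*Ω) * Real.cos (Ω*s+b)) s := by
      have := (h0.sin).const_mul (-(ρ*Ω))
      exact this.congr_deriv (by ring)
    have hs : HasDerivAt (fun s : ℝ => ρ*Ω * Real.cos (Ω*s+b)) (-(ρ*Ω*Ω) * Real.sin (Ω*s+b)) s := by
      have := (h0.cos).const_mul (ρ*Ω)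
      exact this.congr_deriv (by ring)
    exact (hc.prodMk (hs.prodMk (hasDerivAt_const s (0:ℝ)))).deriv
  rw [hD1, hD2]
  simp only
  -- the two fixed vectors
  set ci := Real.cos (Ω*t + 2*π*((i:ℕ):ℝ)/n) with hci
  set si := Real.sin (Ω*t + 2*π*((i:ℕ):ℝ)/n) with hsi
  have hterm : ∀ j ∈ univ.erase i,
      (m * |κ| ^ ((3:ℝ)/2) /
        (sgn' κ - sgn' κ * (κ * odot (sgn' κ)
            (ρ * ci, ρ * si, z0)
            (ρ * Real.cos (Ω*t + 2*π*((j:ℕ):ℝ)/n), ρ * Real.sin (Ω*t + 2*π*((j:ℕ):ℝ)/n), z0)) ^ 2) ^ ((3:ℝ)/2)) •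
        ((ρ * Real.cos (Ω*t + 2*π*((j:ℕ):ℝ)/n), ρ * Real.sin (Ω*t + 2*π*((j:ℕ):ℝ)/n), z0)
          - (κ * odot (sgn' κ)
            (ρ * ci, ρ * si, z0)
            (ρ * Real.cos (Ω*t + 2*π*((j:ℕ):ℝ)/n), ρ * Real.sin (Ω*t + 2*π*((j:ℕ):ℝ)/n), z0)) •
              (ρ * ci, ρ * si, z0))
      = Wt κ ρ m n (((j:ℕ):ℤ) - ((i:ℕ):ℤ)) •
          (((κ*ρ^2-1))*(ρ*ci), ((κ*ρ^2-1))*(ρ*si), κ*ρ^2*z0)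
        + Vt κ ρ m n (((j:ℕ):ℤ) - ((i:ℕ):ℤ)) • (-(ρ*si), ρ*ci, (0:ℝ)) := by
    intro j hj
    have hji : j ≠ i := (Finset.mem_erase.mp hj).1
    set c := Real.cos (2*π*((((j:ℕ):ℤ) - ((i:ℕ):ℤ) : ℤ):ℝ)/n) with hcdef
    set s := Real.sin (2*π*((((j:ℕ):ℤ) - ((i:ℕ):ℤ) : ℤ):ℝ)/n) with hsdef
    have hcb : -1 ≤ c := (hWV i j hji).1
    have hclt : c < 1 := (hWV i j hji).2
    have hX := hXpos c hcb hclt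
    have hθj : Ω*t + 2*π*((j:ℕ):ℝ)/n
        = (Ω*t + 2*π*((i:ℕ):ℝ)/n) + 2*π*((((j:ℕ):ℤ) - ((i:ℕ):ℤ) : ℤ):ℝ)/n := by
      push_cast
      ring
    have hcj : Real.cos (Ω*t + 2*π*((j:ℕ):ℝ)/n) = ci*c - si*s := by
      rw [hθj, hci, hsi, hcdef, hsdef]
      exact Real.cos_add _ _
    have hsj : Real.sin (Ω*t + 2*π*((j:ℕ):ℝ)/n) = si*c + ci*s := by
      rw [hθj, hci, hsi, hcdef, hsdef]
      exact Real.sin_add _ _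
    have hA : κ * odot (sgn' κ) (ρ * ci, ρ * si, z0)
        (ρ * Real.cos (Ω*t + 2*π*((j:ℕ):ℝ)/n), ρ * Real.sin (Ω*t + 2*π*((j:ℕ):ℝ)/n), z0)
        = 1 - κ*ρ^2*(1-c) := by
      simp only [odot]
      rw [hcj, hsj]
      have hpy := Real.sin_sq_add_cos_sq (Ω*t + 2*π*((i:ℕ):ℝ)/n)
      rw [← hci, ← hsi] at hpy
      linear_combination (κ*ρ^2*c)*hpy + κ*(sgn' κ)*hzz + (κ⁻¹ - ρ^2)*κ*hσ2 + hκinv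
    have hDen : sgn' κ - sgn' κ * (κ * odot (sgn' κ) (ρ * ci, ρ * si, z0)
        (ρ * Real.cos (Ω*t + 2*π*((j:ℕ):ℝ)/n), ρ * Real.sin (Ω*t + 2*π*((j:ℕ):ℝ)/n), z0)) ^ 2
        = |κ| * (ρ^2*(1-c)*(2 - κ*ρ^2*(1-c))) := by
      rw [hA]
      linear_combination (ρ^2*(1-c)*(2-κ*ρ^2*(1-c))) * hσκ
    rw [hDen, hA, hcj, hsj, Real.mul_rpow (abs_nonneg κ) hX.le]
    have hcoef : m * |κ|^((3:ℝ)/2) /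
        (|κ|^((3:ℝ)/2) * (ρ^2*(1-c)*(2 - κ*ρ^2*(1-c)))^((3:ℝ)/2)) = m * Fc κ ρ c := by
      unfold Fc
      rw [show (-(3:ℝ)/2) = -((3:ℝ)/2) by ring, Real.rpow_neg hX.le]
      have h1 : |κ|^((3:ℝ)/2) ≠ 0 := ne_of_gt (Real.rpow_pos_of_pos habs _)
      have h2 : (ρ^2*(1-c)*(2 - κ*ρ^2*(1-c)))^((3:ℝ)/2) ≠ 0 :=
        ne_of_gt (Real.rpow_pos_of_pos hX _)
      field_simp
    rw [hcoef]
    unfold Wt Vt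
    rw [← hcdef, ← hsdef]
    simp only [Prod.smul_mk, Prod.mk_add_mk, Prod.mk_sub_mk, smul_eq_mul, Prod.mk.injEq]
    refine ⟨by ring, by ring, by ring⟩
  rw [Finset.sum_congr rfl hterm, Finset.sum_add_distrib,
    ← Finset.sum_smul, ← Finset.sum_smul]
  have hW : ∑ j ∈ univ.erase i, Wt κ ρ m n (((j:ℕ):ℤ) - ((i:ℕ):ℤ)) = S := by
    rw [hSdef]
    refine Finset.sum_nbij' (fun j => j - i) (fun j => j + i) ?_ ?_ ?_ ?_ ?_
    · intro a ha
      exact Finset.mem_erase.mpr ⟨sub_ne_zero.mpr (Finset.mem_erase.mp ha).1, Finset.mem_univ _⟩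
    · intro a ha
      refine Finset.mem_erase.mpr ⟨?_, Finset.mem_univ _⟩
      intro hcon
      have h8 : a + i - i = i - i := by rw [hcon]
      rw [add_sub_cancel_right, sub_self] at h8
      exact (Finset.mem_erase.mp ha).1 h8
    · intro a _; exact sub_add_cancel a i
    · intro a _; exact add_sub_cancel_right a i
    · intro a _
      exact Wt_congr hnR (coe_sub_zmod' a i).symm
  have hV : ∑ j ∈ univ.erase i, Vt κ ρ m n (((j:ℕ):ℤ) - ((i:ℕ):ℤ)) = 0 := by
    have key : ∀ j ∈ univ.erase i,
        Vt κ ρ m n ((((i - (j - i) : Fin n):ℕ):ℤ) - ((i:ℕ):ℤ))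
          = - Vt κ ρ m n (((j:ℕ):ℤ) - ((i:ℕ):ℤ)) := by
      intro j _
      have h1 := coe_sub_zmod' i (j - i)
      have h2 := coe_sub_zmod' j i
      have h3 : ((((i - (j - i) : Fin n):ℕ):ℤ) - ((i:ℕ):ℤ))
          ≡ -(((j:ℕ):ℤ) - ((i:ℕ):ℤ)) [ZMOD (n:ℤ)] := by
        have h4 := (h1.sub (Int.ModEq.refl ((i:ℕ):ℤ))).trans
          (((Int.ModEq.refl ((i:ℕ):ℤ)).sub h2).sub (Int.ModEq.refl ((i:ℕ):ℤ)))
        have h5 : ((i:ℕ):ℤ) - (((j:ℕ):ℤ) - ((i:ℕ):ℤ)) - ((i:ℕ):ℤ)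
            = -(((j:ℕ):ℤ) - ((i:ℕ):ℤ)) := by ring
        rwa [h5] at h4
      rw [Vt_congr hnR h3, Vt_neg]
    refine Finset.sum_involution (fun j _ => i - (j - i)) ?_ ?_ ?_ ?_
    · intro a ha
      rw [key a ha]; ring
    · intro a ha hne heq
      apply hne
      have := key a ha
      rw [heq] at this
      linarith
    · intro a ha
      refine Finset.mem_erase.mpr ⟨?_, Finset.mem_univ _⟩
      intro hcon
      have h6 : a - i = 0 := sub_eq_self.mp hcon
      exact (Finset.mem_erase.mp ha).1 (by rwa [sub_eq_zero] at h6)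
    · intro a _
      rw [sub_sub, sub_add_cancel, sub_sub_cancel]
  rw [hW, hV, zero_smul, add_zero]
  have hvv : κ * odot (sgn' κ) (-(ρ*Ω) * si, ρ*Ω * ci, (0:ℝ)) (-(ρ*Ω) * si, ρ*Ω * ci, (0:ℝ))
      = κ*ρ^2*Ω^2 := by
    simp only [odot]
    have hpy := Real.sin_sq_add_cos_sq (Ω*t + 2*π*((i:ℕ):ℝ)/n)
    rw [← hci, ← hsi] at hpy
    linear_combination (κ*ρ^2*Ω^2)*hpy
  rw [hvv, ← hΩ2]
  simp only [Prod.smul_mk, Prod.mk_sub_mk, smul_eq_mul, Prod.mk.injEq]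
  refine ⟨by ring, by ring, by ring⟩
end
end

section
/- (Core algebraic lemma for Theorem on scalene triangles.) There do not exist real numbers a, b, c > 0 and u, v, w satisfying the sign condition ((u > 0 and w > 0 and v < 0) or (u < 0 and w < 0 and v > 0)) together with the three compatibility conditions (a − c)/b = (u − w)/v, (b − a)/c = (v − u)/w, and (c − b)/a = (w − v)/u. -/
/-- **Core algebraic lemma for the scalene-triangle theorem.** There are no reals
`a, b, c > 0` and `u, v, w` with the sign pattern (`u, w > 0`, `v < 0` or `u, w < 0`,
`v > 0`) satisfying the compatibility conditions `(a-c)/b = (u-w)/v`,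
`(b-a)/c = (v-u)/w` and `(c-b)/a = (w-v)/u`. -/
theorem no_compatible_scalene_coefficients :
    ¬ ∃ a b c u v w : ℝ, 0 < a ∧ 0 < b ∧ 0 < c ∧
      ((0 < u ∧ 0 < w ∧ v < 0) ∨ (u < 0 ∧ w < 0 ∧ 0 < v)) ∧
      (a - c) / b = (u - w) / v ∧
      (b - a) / c = (v - u) / w ∧
      (c - b) / a = (w - v) / u := by
  rintro ⟨a, b, c, u, v, w, ha, hb, hc, hsign, _, h2, h3⟩
  have hu : u ≠ 0 := by rcases hsign with ⟨h, _, _⟩ | ⟨h, _, _⟩ <;> [exact ne_of_gt h; exact ne_of_lt h]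
  have hw : w ≠ 0 := by rcases hsign with ⟨_, h, _⟩ | ⟨_, h, _⟩ <;> [exact ne_of_gt h; exact ne_of_lt h]
  have h2' : (b - a) * w = (v - u) * c := by
    rw [div_eq_div_iff (ne_of_gt hc) hw] at h2; exact h2
  have h3' : (c - b) * u = (w - v) * a := by
    rw [div_eq_div_iff (ne_of_gt ha) hu] at h3; exact h3
  have key : (u + w - v) * (b * w - c * v) = 0 := by
    linear_combination (w - v) * h2' - w * h3'
  rcases hsign with ⟨hu', hw', hv'⟩ | ⟨hu', hw', hv'⟩
  · nlinarith [mul_pos hb hw', mul_pos hc (neg_pos.mpr hv')]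
  · nlinarith [mul_pos hb (neg_pos.mpr hw'), mul_pos hc hv']
end

section
/- (Theorem: every acute triangle on a great circle supports a fixed point for suitable masses.) Let κ > 0 and let θ₁ < θ₂ < θ₃ < θ₁ + 2π satisfy θ₂ − θ₁ < π, θ₃ − θ₂ < π, and θ₁ + 2π − θ₃ < π (an acute triangle inscribed in the equator). Put q_i = κ^{-1/2}(cos θ_i, sin θ_i, 0) and a_ij = κ(q_i ⊙ q_j) = cos(θ_i − θ_j). Then there exist masses m₁, m₂, m₃ > 0 such that for each i ∈ {1,2,3}: ∑_{j≠i} m_j (q_j − a_ij q_i)/(1 − a_ij²)^{3/2} = 0 (a vector identity in ℝ³); i.e., the configuration is a fixed point of the curved 3-body problem. -/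
open Real Finset

noncomputable section

lemma key_pow (x s : ℝ) (hs : 0 < s) (h : Real.sin x ^ 2 = s ^ 2) :
    (1 - Real.cos x ^ 2) ^ ((3:ℝ)/2) = s ^ 3 := by
  have h1 : 1 - Real.cos x ^ 2 = s ^ 2 := by
    nlinarith [Real.sin_sq_add_cos_sq x]
  rw [h1, ← Real.rpow_natCast s 2, ← Real.rpow_mul hs.le]
  norm_num

lemma vec_key (k a b : ℝ) :
    ((k * Real.cos b, k * Real.sin b, (0:ℝ)) : ℝ × ℝ × ℝ)
      - Real.cos (a - b) • (k * Real.cos a, k * Real.sin a, (0:ℝ))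
    = (k * Real.sin (a - b)) • ((Real.sin a, -Real.cos a, (0:ℝ)) : ℝ × ℝ × ℝ) := by
  have h := Real.sin_sq_add_cos_sq a
  simp only [Prod.smul_def, Prod.mk_sub_mk, Prod.mk.injEq, smul_eq_mul]
  refine ⟨?_, ?_, by ring⟩
  · rw [Real.cos_sub, Real.sin_sub]; linear_combination (-(k * Real.cos b)) * h
  · rw [Real.cos_sub, Real.sin_sub]; linear_combination (-(k * Real.sin b)) * h

/-- **Every acute triangle on a great circle supports a fixed point for suitable
masses.** Given an acute triangle inscribed in the equator `z = 0` of the sphere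
`S²_κ` (κ > 0), with vertices at angles `θ 0 < θ 1 < θ 2 < θ 0 + 2π`, all three arcs
less than `π`, there exist positive masses `m₁, m₂, m₃` making the configuration a
fixed point of the curved 3-body problem. -/
theorem acute_triangle_fixed_point
    (κ : ℝ) (hκ : 0 < κ) (θ : Fin 3 → ℝ)
    (h01 : θ 0 < θ 1) (h12 : θ 1 < θ 2) (h20 : θ 2 < θ 0 + 2 * π)
    (hacute1 : θ 1 - θ 0 < π) (hacute2 : θ 2 - θ 1 < π)
    (hacute3 : θ 0 + 2 * π - θ 2 < π)
    (q : Fin 3 → ℝ × ℝ × ℝ)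
    (hq : q = fun i =>
      (κ ^ (-(1:ℝ)/2) * Real.cos (θ i), κ ^ (-(1:ℝ)/2) * Real.sin (θ i), 0)) :
    ∃ m : Fin 3 → ℝ, (∀ i, 0 < m i) ∧
      ∀ i : Fin 3,
        (∑ j ∈ univ.erase i,
          (m j / (1 - (Real.cos (θ i - θ j)) ^ 2) ^ ((3:ℝ)/2)) •
            (q j - Real.cos (θ i - θ j) • q i)) = (0 : ℝ × ℝ × ℝ) := by
  set A := Real.sin (θ 1 - θ 0) with hAdef
  set B := Real.sin (θ 2 - θ 1) with hBdef
  set C := Real.sin (θ 0 - θ 2) with hCdef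
  have hA : 0 < A := Real.sin_pos_of_pos_of_lt_pi (by linarith) hacute1
  have hB : 0 < B := Real.sin_pos_of_pos_of_lt_pi (by linarith) hacute2
  have hC : 0 < C := by
    have : Real.sin (θ 0 + 2 * π - θ 2) = C := by
      rw [hCdef, show θ 0 + 2 * π - θ 2 = (θ 0 - θ 2) + 2 * π by ring,
        Real.sin_add_two_pi]
    rw [← this]
    exact Real.sin_pos_of_pos_of_lt_pi (by linarith) hacute3
  refine ⟨![A^2 * C^2, A^2 * B^2, B^2 * C^2], ?_, ?_⟩
  · intro i
    fin_cases i <;> simp <;> positivity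
  have hD01 : (1 - Real.cos (θ 0 - θ 1) ^ 2) ^ ((3:ℝ)/2) = A ^ 3 := by
    apply key_pow _ _ hA
    rw [show θ 0 - θ 1 = -(θ 1 - θ 0) by ring, Real.sin_neg]; ring
  have hD10 : (1 - Real.cos (θ 1 - θ 0) ^ 2) ^ ((3:ℝ)/2) = A ^ 3 :=
    key_pow _ _ hA rfl
  have hD12 : (1 - Real.cos (θ 1 - θ 2) ^ 2) ^ ((3:ℝ)/2) = B ^ 3 := by
    apply key_pow _ _ hB
    rw [show θ 1 - θ 2 = -(θ 2 - θ 1) by ring, Real.sin_neg]; ring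
  have hD21 : (1 - Real.cos (θ 2 - θ 1) ^ 2) ^ ((3:ℝ)/2) = B ^ 3 :=
    key_pow _ _ hB rfl
  have hD02 : (1 - Real.cos (θ 0 - θ 2) ^ 2) ^ ((3:ℝ)/2) = C ^ 3 :=
    key_pow _ _ hC rfl
  have hD20 : (1 - Real.cos (θ 2 - θ 0) ^ 2) ^ ((3:ℝ)/2) = C ^ 3 := by
    apply key_pow _ _ hC
    rw [show θ 2 - θ 0 = -(θ 0 - θ 2) by ring, Real.sin_neg]; ring
  intro i
  fin_cases i <;>
    simp only [Fin.zero_eta, Fin.mk_one, Fin.reduceFinMk]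
  · have hset : (univ.erase (0 : Fin 3)) = {1, 2} := by decide
    rw [hset, Finset.sum_pair (by decide), hq]
    simp only [Matrix.cons_val_one, Matrix.head_cons, Matrix.cons_val_two,
      Matrix.tail_cons, Matrix.cons_val_zero]
    rw [vec_key (κ ^ (-(1:ℝ)/2)) (θ 0) (θ 1), vec_key (κ ^ (-(1:ℝ)/2)) (θ 0) (θ 2),
      hD01, hD02, smul_smul, smul_smul, ← add_smul]
    rw [show Real.sin (θ 0 - θ 1) = -A by
      rw [hAdef, show θ 0 - θ 1 = -(θ 1 - θ 0) by ring, Real.sin_neg]]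
    have : A ^ 2 * B ^ 2 / A ^ 3 * (κ ^ (-(1:ℝ)/2) * -A)
        + B ^ 2 * C ^ 2 / C ^ 3 * (κ ^ (-(1:ℝ)/2) * C) = 0 := by
      field_simp
      ring
    rw [this, zero_smul]
  · have hset : (univ.erase (1 : Fin 3)) = {0, 2} := by decide
    rw [hset, Finset.sum_pair (by decide), hq]
    simp only [Matrix.cons_val_one, Matrix.head_cons, Matrix.cons_val_two,
      Matrix.tail_cons, Matrix.cons_val_zero]
    rw [vec_key (κ ^ (-(1:ℝ)/2)) (θ 1) (θ 0), vec_key (κ ^ (-(1:ℝ)/2)) (θ 1) (θ 2),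
      hD10, hD12, smul_smul, smul_smul, ← add_smul]
    rw [show Real.sin (θ 1 - θ 2) = -B by
      rw [hBdef, show θ 1 - θ 2 = -(θ 2 - θ 1) by ring, Real.sin_neg]]
    have : A ^ 2 * C ^ 2 / A ^ 3 * (κ ^ (-(1:ℝ)/2) * A)
        + B ^ 2 * C ^ 2 / B ^ 3 * (κ ^ (-(1:ℝ)/2) * -B) = 0 := by
      field_simp
      ring
    rw [this, zero_smul]
  · have hset : (univ.erase (2 : Fin 3)) = {0, 1} := by decide
    rw [hset, Finset.sum_pair (by decide), hq]
    simp only [Matrix.cons_val_one, Matrix.head_cons, Matrix.cons_val_two,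
      Matrix.tail_cons, Matrix.cons_val_zero]
    rw [vec_key (κ ^ (-(1:ℝ)/2)) (θ 2) (θ 0), vec_key (κ ^ (-(1:ℝ)/2)) (θ 2) (θ 1),
      hD20, hD21, smul_smul, smul_smul, ← add_smul]
    rw [show Real.sin (θ 2 - θ 0) = -C by
      rw [hCdef, show θ 2 - θ 0 = -(θ 0 - θ 2) by ring, Real.sin_neg]]
    have : A ^ 2 * C ^ 2 / C ^ 3 * (κ ^ (-(1:ℝ)/2) * -C)
        + A ^ 2 * B ^ 2 / B ^ 3 * (κ ^ (-(1:ℝ)/2) * B) = 0 := by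
      field_simp
      ring
    rw [this, zero_smul]
end
end

section
/- (Lemma: the determinant of the reduced fixed-point system vanishes.) Let κ > 0 and let (x_i, y_i), i = 1, 2, 3, satisfy κ(x_i² + y_i²) = 1, and set a_ij = κ(x_i x_j + y_i y_j); assume a_ij² ≠ 1 for all i ≠ j (the points are pairwise distinct and non-antipodal). Define q_ij = (x_j − a_ij x_i)/(1 − a_ij²)^{3/2} for i ≠ j. Then q₁₂ q₂₃ q₃₁ + q₁₃ q₂₁ q₃₂ = 0; equivalently, the matrix A = [[0, q₁₂, q₁₃],[q₂₁, 0, q₂₃],[q₃₁, q₃₂, 0]] has determinant zero. -/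
open Real Finset

/-- **The determinant of the reduced fixed-point system vanishes.** For three pairwise
distinct, non-antipodal points on the equatorial circle `κ(x² + y²) = 1` of `S²_κ`,
setting `a_ij = κ(x_i x_j + y_i y_j)` and `q_ij = (x_j - a_ij x_i)/(1 - a_ij²)^{3/2}`,
one has `q₁₂ q₂₃ q₃₁ + q₁₃ q₂₁ q₃₂ = 0`; equivalently, the matrix
`[[0, q₁₂, q₁₃], [q₂₁, 0, q₂₃], [q₃₁, q₃₂, 0]]` has zero determinant. -/
theorem fixed_point_matrix_det_zero
    (κ : ℝ) (hκ : 0 < κ) (x y : Fin 3 → ℝ)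
    (hcirc : ∀ i, κ * ((x i) ^ 2 + (y i) ^ 2) = 1)
    (a : Fin 3 → Fin 3 → ℝ)
    (ha : ∀ i j, a i j = κ * (x i * x j + y i * y j))
    (hnonsing : ∀ i j, i ≠ j → (a i j) ^ 2 ≠ 1)
    (q : Fin 3 → Fin 3 → ℝ)
    (hq : ∀ i j, i ≠ j → q i j = (x j - a i j * x i) / (1 - (a i j) ^ 2) ^ ((3:ℝ)/2)) :
    q 0 1 * q 1 2 * q 2 0 + q 0 2 * q 1 0 * q 2 1 = 0 ∧
    Matrix.det !![0, q 0 1, q 0 2; q 1 0, 0, q 1 2; q 2 0, q 2 1, 0] = 0 := by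
  have hsym : ∀ i j, a i j = a j i := by
    intro i j; rw [ha, ha]; ring
  have hpos : ∀ i j, i ≠ j → 0 < 1 - (a i j) ^ 2 := by
    intro i j hij
    have h1 := hcirc i
    have h2 := hcirc j
    have hsq : 1 - (a i j) ^ 2 = (κ * (x i * y j - x j * y i)) ^ 2 := by
      rw [ha]
      nlinarith [h1, h2]
    rcases lt_or_eq_of_le (by rw [hsq]; positivity : (0:ℝ) ≤ 1 - (a i j)^2) with h | h
    · exact h
    · exact absurd (by linarith : (a i j)^2 = 1) (hnonsing i j hij)
  have hdpos : ∀ i j, i ≠ j → 0 < (1 - (a i j) ^ 2) ^ ((3:ℝ)/2) := by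
    intro i j hij
    exact Real.rpow_pos_of_pos (hpos i j hij) _
  have hn : ∀ i j, x j - a i j * x i = κ * y i * (x j * y i - x i * y j) := by
    intro i j
    rw [ha]
    linear_combination (-(x j)) * (hcirc i)
  have hq' : ∀ i j, i ≠ j →
      q i j = κ * y i * (x j * y i - x i * y j) / (1 - (a i j) ^ 2) ^ ((3:ℝ)/2) := by
    intro i j hij
    rw [hq i j hij, hn]
  have e01 : q 0 1 = κ * y 0 * (x 1 * y 0 - x 0 * y 1) / (1 - (a 0 1) ^ 2) ^ ((3:ℝ)/2) :=
    hq' 0 1 (by decide)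
  have e12 : q 1 2 = κ * y 1 * (x 2 * y 1 - x 1 * y 2) / (1 - (a 1 2) ^ 2) ^ ((3:ℝ)/2) :=
    hq' 1 2 (by decide)
  have e20 : q 2 0 = κ * y 2 * (x 0 * y 2 - x 2 * y 0) / (1 - (a 0 2) ^ 2) ^ ((3:ℝ)/2) := by
    rw [hq' 2 0 (by decide), hsym 2 0]
  have e02 : q 0 2 = κ * y 0 * (x 2 * y 0 - x 0 * y 2) / (1 - (a 0 2) ^ 2) ^ ((3:ℝ)/2) :=
    hq' 0 2 (by decide)
  have e10 : q 1 0 = κ * y 1 * (x 0 * y 1 - x 1 * y 0) / (1 - (a 0 1) ^ 2) ^ ((3:ℝ)/2) := by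
    rw [hq' 1 0 (by decide), hsym 1 0]
  have e21 : q 2 1 = κ * y 2 * (x 1 * y 2 - x 2 * y 1) / (1 - (a 1 2) ^ 2) ^ ((3:ℝ)/2) := by
    rw [hq' 2 1 (by decide), hsym 2 1]
  have d01 : (1 - (a 0 1) ^ 2) ^ ((3:ℝ)/2) ≠ 0 := ne_of_gt (hdpos 0 1 (by decide))
  have d12 : (1 - (a 1 2) ^ 2) ^ ((3:ℝ)/2) ≠ 0 := ne_of_gt (hdpos 1 2 (by decide))
  have d02 : (1 - (a 0 2) ^ 2) ^ ((3:ℝ)/2) ≠ 0 := ne_of_gt (hdpos 0 2 (by decide))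
  have key : q 0 1 * q 1 2 * q 2 0 + q 0 2 * q 1 0 * q 2 1 = 0 := by
    rw [e01, e12, e20, e02, e10, e21]
    field_simp
    ring
  refine ⟨key, ?_⟩
  rw [show ((0:Fin 3)) = 0 from rfl, Matrix.det_fin_three]
  norm_num [Matrix.cons_val_zero, Matrix.cons_val_one, Matrix.head_cons]
  simp only [Matrix.cons_val_two, Matrix.vecHead, Matrix.vecTail, Function.comp_apply, Fin.succ_zero_eq_one, Fin.succ_one_eq_two, Matrix.cons_val_zero, Matrix.cons_val_one]
  linear_combination key
end

section
/- (Theorem: relative equilibria generated from fixed points on a great circle.) Let κ > 0, let θ₁, θ₂, θ₃ ∈ ℝ be pairwise distinct modulo 2π with no two positions antipodal, put p_i = κ^{-1/2}(cos θ_i, sin θ_i, 0) and a_ij = cos(θ_i − θ_j), and suppose m₁, m₂, m₃ > 0 satisfy the fixed-point equations ∑_{j≠i} m_j (p_j − a_ij p_i)/(1 − a_ij²)^{3/2} = 0 for each i. Then for every Ω ∈ ℝ the curves q_i(t) = κ^{-1/2}(cos(Ωt + θ_i), sin(Ωt + θ_i), 0), i = 1, 2, 3, satisfy the equations of motion of the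 curved 3-body problem for all t ∈ ℝ; i.e., the configuration rotating uniformly along the equator is a relative equilibrium. -/
open Real Finset

noncomputable section

/-- Rotation by angle `φ` in the `xy`-plane, as a linear map on `ℝ³`. -/
def rotL (φ : ℝ) : (ℝ × ℝ × ℝ) →ₗ[ℝ] (ℝ × ℝ × ℝ) where
  toFun v := (Real.cos φ * v.1 - Real.sin φ * v.2.1,
              Real.sin φ * v.1 + Real.cos φ * v.2.1, v.2.2)
  map_add' := by
    rintro ⟨a1, a2, a3⟩ ⟨b1, b2, b3⟩
    refine Prod.ext ?_ (Prod.ext ?_ ?_) <;> simp <;> ring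
  map_smul' := by
    rintro c ⟨a1, a2, a3⟩
    refine Prod.ext ?_ (Prod.ext ?_ ?_) <;> simp [smul_eq_mul] <;> ring

/-- **Relative equilibria generated from fixed points on a great circle.** If three
positive masses placed on the equator of `S²_κ` (κ > 0), at pairwise distinct and
non-antipodal angles `θ i`, form a fixed point of the curved 3-body problem, then for
every angular velocity `Ω` the uniformly rotating configuration
`q_i(t) = κ^{-1/2}(cos(Ωt + θ_i), sin(Ωt + θ_i), 0)` satisfies the equations of motion
for all time; i.e., it is a relative equilibrium. -/
theorem relative_equilibrium_from_fixed_point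
    (κ : ℝ) (hκ : 0 < κ) (θ : Fin 3 → ℝ)
    (hdistinct : ∀ i j : Fin 3, i ≠ j → Real.cos (θ i - θ j) ≠ 1)
    (hantipodal : ∀ i j : Fin 3, i ≠ j → Real.cos (θ i - θ j) ≠ -1)
    (m : Fin 3 → ℝ) (hm : ∀ i, 0 < m i)
    (p : Fin 3 → ℝ × ℝ × ℝ)
    (hp : p = fun i =>
      (κ ^ (-(1:ℝ)/2) * Real.cos (θ i), κ ^ (-(1:ℝ)/2) * Real.sin (θ i), 0))
    (hfix : ∀ i : Fin 3,
      (∑ j ∈ univ.erase i,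
        (m j / (1 - (Real.cos (θ i - θ j)) ^ 2) ^ ((3:ℝ)/2)) •
          (p j - Real.cos (θ i - θ j) • p i)) = (0 : ℝ × ℝ × ℝ)) :
    ∀ Ω t : ℝ,
      curvedEOM κ m
        (fun (i : Fin 3) (s : ℝ) =>
          (κ ^ (-(1:ℝ)/2) * Real.cos (Ω * s + θ i),
           κ ^ (-(1:ℝ)/2) * Real.sin (Ω * s + θ i), 0)) t := by
  subst hp
  intro Ω t i
  have hσ : sgn' κ = 1 := if_pos hκ
  have habs : |κ| = κ := abs_of_pos hκ
  set R : ℝ := κ ^ (-(1:ℝ)/2) with hRdef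
  have hκR2 : κ * R ^ 2 = 1 := by
    have h2 : R ^ 2 = κ ^ (-(1:ℝ)) := by
      rw [hRdef, ← Real.rpow_natCast (κ ^ (-(1:ℝ)/2)) 2, ← Real.rpow_mul hκ.le]
      norm_num
    rw [h2, Real.rpow_neg hκ.le, Real.rpow_one]
    exact mul_inv_cancel₀ hκ.ne'
  have hlin : ∀ (c s : ℝ), HasDerivAt (fun u => Ω * u + c) Ω s := by
    intro c s
    simpa using ((hasDerivAt_id s).const_mul Ω).add_const c
  have hd1 : ∀ c : ℝ,
      deriv (fun s => (R * Real.cos (Ω * s + c), R * Real.sin (Ω * s + c), (0:ℝ))) =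
      fun s => (R * (-Real.sin (Ω * s + c) * Ω), R * (Real.cos (Ω * s + c) * Ω), (0:ℝ)) := by
    intro c; funext s
    exact (HasDerivAt.prodMk (((Real.hasDerivAt_cos (Ω * s + c)).comp s (hlin c s)).const_mul R)
      (HasDerivAt.prodMk (((Real.hasDerivAt_sin (Ω * s + c)).comp s (hlin c s)).const_mul R)
        (hasDerivAt_const s (0:ℝ)))).deriv
  have hd2 : ∀ c : ℝ,
      deriv (fun s => (R * (-Real.sin (Ω * s + c) * Ω), R * (Real.cos (Ω * s + c) * Ω), (0:ℝ))) t =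
      (R * (-(Real.cos (Ω * t + c) * Ω) * Ω), R * (-Real.sin (Ω * t + c) * Ω * Ω), (0:ℝ)) := by
    intro c
    exact (HasDerivAt.prodMk ((((Real.hasDerivAt_sin (Ω * t + c)).comp t (hlin c t)).neg.mul_const Ω).const_mul R)
      (HasDerivAt.prodMk ((((Real.hasDerivAt_cos (Ω * t + c)).comp t (hlin c t)).mul_const Ω).const_mul R)
        (hasDerivAt_const t (0:ℝ)))).deriv
  have hself : κ * odot 1 (R * (-Real.sin (Ω * t + θ i) * Ω), R * (Real.cos (Ω * t + θ i) * Ω), (0:ℝ))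
      (R * (-Real.sin (Ω * t + θ i) * Ω), R * (Real.cos (Ω * t + θ i) * Ω), (0:ℝ)) = Ω ^ 2 := by
    have h := Real.sin_sq_add_cos_sq (Ω * t + θ i)
    simp only [odot]
    linear_combination (κ * R ^ 2 * Ω ^ 2) * h + Ω ^ 2 * hκR2
  have ha : ∀ j : Fin 3, κ * odot 1 (R * Real.cos (Ω * t + θ i), R * Real.sin (Ω * t + θ i), (0:ℝ))
      (R * Real.cos (Ω * t + θ j), R * Real.sin (Ω * t + θ j), (0:ℝ)) = Real.cos (θ i - θ j) := by
    intro j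
    have hab : θ i - θ j = (Ω * t + θ i) - (Ω * t + θ j) := by ring
    rw [hab, Real.cos_sub]
    simp only [odot]
    linear_combination (Real.cos (Ω * t + θ i) * Real.cos (Ω * t + θ j)
      + Real.sin (Ω * t + θ i) * Real.sin (Ω * t + θ j)) * hκR2
  have hrot : ∀ j : Fin 3,
      ((R * Real.cos (Ω * t + θ j), R * Real.sin (Ω * t + θ j), (0:ℝ))
        - Real.cos (θ i - θ j) • (R * Real.cos (Ω * t + θ i), R * Real.sin (Ω * t + θ i), (0:ℝ)))
      = rotL (Ω * t) ((R * Real.cos (θ j), R * Real.sin (θ j), (0:ℝ))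
          - Real.cos (θ i - θ j) • (R * Real.cos (θ i), R * Real.sin (θ i), (0:ℝ))) := by
    intro j
    refine Prod.ext ?_ (Prod.ext ?_ ?_) <;>
      simp [rotL, smul_eq_mul, Real.cos_add, Real.sin_add] <;> ring
  have hsum : (∑ j ∈ univ.erase i,
      (m j * κ ^ ((3:ℝ)/2) / (1 - Real.cos (θ i - θ j) ^ 2) ^ ((3:ℝ)/2)) •
        ((R * Real.cos (Ω * t + θ j), R * Real.sin (Ω * t + θ j), (0:ℝ))
          - Real.cos (θ i - θ j) • (R * Real.cos (Ω * t + θ i), R * Real.sin (Ω * t + θ i), (0:ℝ))))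
      = (0 : ℝ × ℝ × ℝ) := by
    calc (∑ j ∈ univ.erase i,
        (m j * κ ^ ((3:ℝ)/2) / (1 - Real.cos (θ i - θ j) ^ 2) ^ ((3:ℝ)/2)) •
          ((R * Real.cos (Ω * t + θ j), R * Real.sin (Ω * t + θ j), (0:ℝ))
            - Real.cos (θ i - θ j) • (R * Real.cos (Ω * t + θ i), R * Real.sin (Ω * t + θ i), (0:ℝ))))
        = ∑ j ∈ univ.erase i, rotL (Ω * t)
            ((κ ^ ((3:ℝ)/2) * (m j / (1 - Real.cos (θ i - θ j) ^ 2) ^ ((3:ℝ)/2))) •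
              ((R * Real.cos (θ j), R * Real.sin (θ j), (0:ℝ))
                - Real.cos (θ i - θ j) • (R * Real.cos (θ i), R * Real.sin (θ i), (0:ℝ)))) := by
          refine Finset.sum_congr rfl fun j _ => ?_
          rw [hrot j]
          simp only [LinearMap.map_smul]
          rw [← hrot j]
          congr 1
          ring
      _ = rotL (Ω * t) (κ ^ ((3:ℝ)/2) • ∑ j ∈ univ.erase i,
            (m j / (1 - Real.cos (θ i - θ j) ^ 2) ^ ((3:ℝ)/2)) •
              ((R * Real.cos (θ j), R * Real.sin (θ j), (0:ℝ))
                - Real.cos (θ i - θ j) • (R * Real.cos (θ i), R * Real.sin (θ i), (0:ℝ)))) := by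
          rw [← map_sum]
          congr 1
          rw [Finset.smul_sum]
          refine Finset.sum_congr rfl fun j _ => ?_
          rw [smul_smul]
      _ = 0 := by rw [hfix i, smul_zero, map_zero]
  simp only []
  simp only [hd1]
  rw [hd2 (θ i)]
  simp only [hσ, habs, hself, ha, one_mul]
  rw [hsum]
  refine Prod.ext ?_ (Prod.ext ?_ ?_) <;> simp <;> ring
end
end

section
/- (Isosceles fixed-point criterion.) Let κ > 0, M, m > 0, and let x, y > 0 satisfy κ(x² + y²) = 1. Place masses m₁ = m₂ = M and m₃ = m at q₁ = (x, y, 0), q₂ = (−x, y, 0), q₃ = (0, −κ^{-1/2}, 0), and set a_ij = κ(q_i ⊙ q_j) with a⊙b = a₁b₁ + a₂b₂ + a₃b₃. Then the configuration is a fixed point of the curved 3-body problem — i.e., ∑_{j≠i} m_j (q_j − a_ij q_i)/(1 − a_ij²)^{3/2} = 0 for each i ∈ {1,2,3} — if and only if M = 4κ m y². -/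
open Real Finset

noncomputable section

private lemma sq_rpow_three_halves_s13 {c : ℝ} (hc : 0 ≤ c) :
    ((c ^ 2 : ℝ)) ^ ((3:ℝ)/2) = c ^ 3 := by
  rw [← Real.rpow_natCast c 2, ← Real.rpow_mul hc,
    show ((2:ℕ):ℝ)*((3:ℝ)/2) = ((3:ℕ):ℝ) by norm_num, Real.rpow_natCast]

/-- **Isosceles fixed-point criterion.** Place masses `M, M, m > 0` at
`q₁ = (x, y, 0)`, `q₂ = (-x, y, 0)`, `q₃ = (0, -κ^{-1/2}, 0)` on the equator of
`S²_κ` (κ > 0), with `x, y > 0` and `κ(x² + y²) = 1`. The configuration is a fixed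
point of the curved 3-body problem if and only if `M = 4κ m y²`. -/
theorem isosceles_fixed_point_iff
    (κ : ℝ) (hκ : 0 < κ) (M m : ℝ) (hM : 0 < M) (hm : 0 < m)
    (x y : ℝ) (hx : 0 < x) (hy : 0 < y) (hxy : κ * (x ^ 2 + y ^ 2) = 1)
    (q : Fin 3 → ℝ × ℝ × ℝ)
    (hq : q = ![(x, y, 0), (-x, y, 0), (0, -κ ^ (-(1:ℝ)/2), 0)])
    (ms : Fin 3 → ℝ) (hms : ms = ![M, M, m])
    (a : Fin 3 → Fin 3 → ℝ)
    (ha : ∀ i j, a i j = κ * ((q i).1 * (q j).1 + (q i).2.1 * (q j).2.1)) :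
    (∀ i : Fin 3,
      (∑ j ∈ univ.erase i,
        (ms j / (1 - (a i j) ^ 2) ^ ((3:ℝ)/2)) • (q j - a i j • q i))
      = (0 : ℝ × ℝ × ℝ)) ↔ M = 4 * κ * m * y ^ 2 := by
  subst hq hms
  set r := Real.sqrt κ with hrdef
  have hr0 : 0 < r := Real.sqrt_pos.mpr hκ
  have hr2 : r ^ 2 = κ := Real.sq_sqrt hκ.le
  have hsr : κ ^ (-(1:ℝ)/2) = r⁻¹ := by
    rw [show (-(1:ℝ)/2) = -(1/2:ℝ) by norm_num, Real.rpow_neg hκ.le, ← Real.sqrt_eq_rpow]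
  have hkr : κ * r⁻¹ = r := by rw [← hr2]; field_simp
  have hrinv : r * r⁻¹ = 1 := mul_inv_cancel₀ hr0.ne'
  -- values of the matrix `a`
  have h00 : a 0 0 = 1 := by
    rw [ha]; simp only [Matrix.cons_val_zero]; linear_combination hxy
  have h11 : a 1 1 = 1 := by
    rw [ha]; simp only [Matrix.cons_val_one, Matrix.head_cons, Matrix.cons_val_zero]; linear_combination hxy
  have h22 : a 2 2 = 1 := by
    rw [ha]
    simp only [Matrix.cons_val_two, Matrix.tail_cons, Matrix.head_cons, hsr]
    linear_combination r⁻¹*hkr + hrinv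
  have h01 : a 0 1 = κ * (y^2 - x^2) := by
    rw [ha]; simp only [Matrix.cons_val_zero, Matrix.cons_val_one, Matrix.head_cons]; ring
  have h10 : a 1 0 = κ * (y^2 - x^2) := by
    rw [ha]; simp only [Matrix.cons_val_zero, Matrix.cons_val_one, Matrix.head_cons]; ring
  have h02 : a 0 2 = -(r * y) := by
    rw [ha]
    simp only [Matrix.cons_val_zero, Matrix.cons_val_two, Matrix.tail_cons, Matrix.head_cons, hsr]
    linear_combination (-y)*hkr
  have h20 : a 2 0 = -(r * y) := by
    rw [ha]
    simp only [Matrix.cons_val_zero, Matrix.cons_val_two, Matrix.tail_cons, Matrix.head_cons, hsr]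
    linear_combination (-y)*hkr
  have h12 : a 1 2 = -(r * y) := by
    rw [ha]
    simp only [Matrix.cons_val_one, Matrix.cons_val_two, Matrix.tail_cons, Matrix.head_cons, hsr, Matrix.cons_val_zero]
    linear_combination (-y)*hkr
  have h21 : a 2 1 = -(r * y) := by
    rw [ha]
    simp only [Matrix.cons_val_one, Matrix.cons_val_two, Matrix.tail_cons, Matrix.head_cons, hsr, Matrix.cons_val_zero]
    linear_combination (-y)*hkr
  -- the two denominators
  have hp1 : (1 - (κ * (y^2 - x^2))^2) ^ ((3:ℝ)/2) = 8 * κ^3 * x^3 * y^3 := by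
    rw [show 1 - (κ * (y^2 - x^2))^2 = (2*κ*x*y)^2 by
        linear_combination (-(κ*(x^2+y^2))-1) * hxy,
      sq_rpow_three_halves_s13 (by positivity)]
    ring
  have hp2 : (1 - (-(r * y))^2) ^ ((3:ℝ)/2) = r^3 * x^3 := by
    rw [show 1 - (-(r * y))^2 = (r*x)^2 by
        linear_combination (-(x^2+y^2))*hr2 - hxy,
      sq_rpow_three_halves_s13 (by positivity)]
    ring
  have hκ' := hκ.ne'
  have hx' := hx.ne'
  have hy' := hy.ne'
  have hr' := hr0.ne'
  constructor
  · intro H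
    have h0 := H 0
    rw [Finset.sum_erase _ (by rw [h00]; simp), Fin.sum_univ_three,
      h00, h01, h02, hp1, hp2] at h0
    simp only [Matrix.cons_val_zero, Matrix.cons_val_one, Matrix.head_cons, Matrix.cons_val_two,
      Matrix.tail_cons, hsr, one_smul, sub_self, smul_zero, zero_add, Prod.smul_mk,
      Prod.mk_sub_mk, Prod.mk_add_mk, smul_eq_mul, Prod.mk_eq_zero, Prod.ext_iff,
      Prod.fst_zero, Prod.snd_zero, add_zero] at h0
    obtain ⟨e1, -⟩ := h0
    field_simp at e1
    have key : M * r^3 * (2*κ*x^4*y^2) = 4*κ^2*m*y^2*r * (2*κ*x^4*y^2) := by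
      linear_combination (-x^3)*e1 + (M*r^3*x^4)*hxy
    have key2 : M * r^3 = 4*κ^2*m*y^2*r := mul_right_cancel₀ (by positivity) key
    have key3 : M * r^2 = 4*κ^2*m*y^2 := mul_right_cancel₀ hr0.ne' (by linear_combination key2)
    exact mul_right_cancel₀ hκ.ne' (by linear_combination key3 - M*hr2)
  · intro hMv i
    subst hMv
    clear_value r
    subst hr2
    fin_cases i
    · simp only [Fin.zero_eta, Fin.isValue]
      rw [Finset.sum_erase _ (by rw [h00]; simp), Fin.sum_univ_three,
        h00, h01, h02, hp1, hp2]
      simp only [Matrix.cons_val_zero, Matrix.cons_val_one, Matrix.head_cons, Matrix.cons_val_two,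
        Matrix.tail_cons, hsr, one_smul, sub_self, smul_zero, zero_add, Prod.smul_mk,
        Prod.mk_sub_mk, Prod.mk_add_mk, smul_eq_mul, Prod.mk_eq_zero, Prod.ext_iff,
        Prod.fst_zero, Prod.snd_zero, add_zero]
      refine ⟨?_, ?_, by ring⟩
      · field_simp
        linear_combination (4*m*x)*hxy
      · field_simp
        linear_combination (4*m)*hxy
    · simp only [Fin.mk_one, Fin.isValue]
      rw [Finset.sum_erase _ (by rw [h11]; simp), Fin.sum_univ_three,
        h11, h10, h12, hp1, hp2]
      simp only [Matrix.cons_val_zero, Matrix.cons_val_one, Matrix.head_cons, Matrix.cons_val_two,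
        Matrix.tail_cons, hsr, one_smul, sub_self, smul_zero, zero_add, Prod.smul_mk,
        Prod.mk_sub_mk, Prod.mk_add_mk, smul_eq_mul, Prod.mk_eq_zero, Prod.ext_iff,
        Prod.fst_zero, Prod.snd_zero, add_zero]
      refine ⟨?_, ?_, by ring⟩
      · field_simp
        linear_combination (-(4*m*x))*hxy
      · field_simp
        linear_combination (4*m)*hxy
    · simp only [Fin.reduceFinMk, Fin.isValue]
      rw [Finset.sum_erase _ (by rw [h22]; simp), Fin.sum_univ_three,
        h22, h20, h21, hp2]
      simp only [Matrix.cons_val_zero, Matrix.cons_val_one, Matrix.head_cons, Matrix.cons_val_two,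
        Matrix.tail_cons, hsr, one_smul, sub_self, smul_zero, zero_add, Prod.smul_mk,
        Prod.mk_sub_mk, Prod.mk_add_mk, smul_eq_mul, Prod.mk_eq_zero, Prod.ext_iff,
        Prod.fst_zero, Prod.snd_zero, add_zero]
      refine ⟨?_, ?_, by ring⟩
      · field_simp
        ring
      · field_simp
        ring
end
end

section
/- (Conservation of angular momentum.) Let n ≥ 2, κ ≠ 0, σ = sign(κ), and m₁,…,m_n > 0. Suppose q_i : ℝ → ℝ³, i = 1,…,n, are twice-differentiable curves with κ(q_i⊙q_i) = 1 for all t, no two of which are at a singular configuration (κ q_i⊙q_j ≠ ±1 for i ≠ j), satisfying the equations of motion of the curved n-body problem on an open interval I. Then the vector-valued function t ↦ ∑_{i=1}^n m_i (q_i(t) ⊗ q̇_i(t)) is constant on I, where a⊗b = (a₂b₃ − a₃b₂, a₃b₁ − a₁b₃, σ(a₁b₂ − a₂b₁)). -/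
open Real Finset

noncomputable section

lemma my_odot_comm (σ : ℝ) (a b : ℝ × ℝ × ℝ) : odot σ a b = odot σ b a := by
  simp only [odot]; ring

lemma my_otimes_self (σ : ℝ) (a : ℝ × ℝ × ℝ) : otimes σ a a = 0 := by
  simp only [otimes, Prod.ext_iff, Prod.fst_zero, Prod.snd_zero]
  refine ⟨by ring, by ring, by ring⟩

lemma my_otimes_anticomm (σ : ℝ) (a b : ℝ × ℝ × ℝ) : otimes σ b a = - otimes σ a b := by
  simp only [otimes, Prod.ext_iff, Prod.fst_neg, Prod.snd_neg]
  refine ⟨by ring, by ring, by ring⟩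

lemma my_otimes_add (σ : ℝ) (a b c : ℝ × ℝ × ℝ) :
    otimes σ a (b + c) = otimes σ a b + otimes σ a c := by
  simp only [otimes, Prod.ext_iff, Prod.fst_add, Prod.snd_add]
  refine ⟨by ring, by ring, by ring⟩

lemma my_otimes_sub (σ : ℝ) (a b c : ℝ × ℝ × ℝ) :
    otimes σ a (b - c) = otimes σ a b - otimes σ a c := by
  simp only [otimes, Prod.ext_iff, Prod.fst_sub, Prod.snd_sub]
  refine ⟨by ring, by ring, by ring⟩

lemma my_otimes_smul (σ r : ℝ) (a b : ℝ × ℝ × ℝ) :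
    otimes σ a (r • b) = r • otimes σ a b := by
  simp only [otimes, Prod.ext_iff, Prod.smul_fst, Prod.smul_snd, smul_eq_mul]
  refine ⟨by ring, by ring, by ring⟩

lemma my_otimes_zero (σ : ℝ) (a : ℝ × ℝ × ℝ) : otimes σ a 0 = 0 := by
  simp only [otimes, Prod.ext_iff, Prod.fst_zero, Prod.snd_zero]
  refine ⟨by ring, by ring, by ring⟩

lemma my_otimes_sum (σ : ℝ) (a : ℝ × ℝ × ℝ) {ι : Type*} (s : Finset ι)
    (f : ι → ℝ × ℝ × ℝ) :
    otimes σ a (∑ j ∈ s, f j) = ∑ j ∈ s, otimes σ a (f j) := by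
  classical
  induction s using Finset.induction_on with
  | empty => simp [my_otimes_zero]
  | insert _ _ h ih => rw [Finset.sum_insert h, Finset.sum_insert h, my_otimes_add, ih]

lemma my_hasDerivAt_otimes (σ : ℝ) {f g : ℝ → ℝ × ℝ × ℝ} {f' g' : ℝ × ℝ × ℝ} {t : ℝ}
    (hf : HasDerivAt f f' t) (hg : HasDerivAt g g' t) :
    HasDerivAt (fun s => otimes σ (f s) (g s))
      (otimes σ f' (g t) + otimes σ (f t) g') t := by
  have hf1 : HasDerivAt (fun s => (f s).1) f'.1 t :=
    ((ContinuousLinearMap.fst ℝ ℝ (ℝ × ℝ)).hasFDerivAt.comp_hasDerivAt t hf)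
  have hf2 : HasDerivAt (fun s => (f s).2) f'.2 t :=
    ((ContinuousLinearMap.snd ℝ ℝ (ℝ × ℝ)).hasFDerivAt.comp_hasDerivAt t hf)
  have hf21 : HasDerivAt (fun s => (f s).2.1) f'.2.1 t :=
    ((ContinuousLinearMap.fst ℝ ℝ ℝ).hasFDerivAt.comp_hasDerivAt t hf2)
  have hf22 : HasDerivAt (fun s => (f s).2.2) f'.2.2 t :=
    ((ContinuousLinearMap.snd ℝ ℝ ℝ).hasFDerivAt.comp_hasDerivAt t hf2)
  have hg1 : HasDerivAt (fun s => (g s).1) g'.1 t :=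
    ((ContinuousLinearMap.fst ℝ ℝ (ℝ × ℝ)).hasFDerivAt.comp_hasDerivAt t hg)
  have hg2 : HasDerivAt (fun s => (g s).2) g'.2 t :=
    ((ContinuousLinearMap.snd ℝ ℝ (ℝ × ℝ)).hasFDerivAt.comp_hasDerivAt t hg)
  have hg21 : HasDerivAt (fun s => (g s).2.1) g'.2.1 t :=
    ((ContinuousLinearMap.fst ℝ ℝ ℝ).hasFDerivAt.comp_hasDerivAt t hg2)
  have hg22 : HasDerivAt (fun s => (g s).2.2) g'.2.2 t :=
    ((ContinuousLinearMap.snd ℝ ℝ ℝ).hasFDerivAt.comp_hasDerivAt t hg2)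
  have h := ((hf21.mul hg22).sub (hf22.mul hg21)).prodMk
    (((hf22.mul hg1).sub (hf1.mul hg22)).prodMk
      (((hf1.mul hg21).sub (hf21.mul hg1)).const_mul σ))
  have heq : otimes σ f' (g t) + otimes σ (f t) g' =
      ((f'.2.1 * (g t).2.2 + (f t).2.1 * g'.2.2 - (f'.2.2 * (g t).2.1 + (f t).2.2 * g'.2.1)),
       (f'.2.2 * (g t).1 + (f t).2.2 * g'.1 - (f'.1 * (g t).2.2 + (f t).1 * g'.2.2)),
       σ * (f'.1 * (g t).2.1 + (f t).1 * g'.2.1 - (f'.2.1 * (g t).1 + (f t).2.1 * g'.1))) := by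
    simp only [otimes, Prod.ext_iff, Prod.fst_add, Prod.snd_add]
    refine ⟨by ring, by ring, by ring⟩
  rw [heq]
  exact h

/-- **Conservation of angular momentum.** Along any solution of the curved `n`-body
problem on an open interval (twice differentiable, confined to the surface, avoiding
singular configurations), the total angular momentum `∑ m_i (q_i ⊗ q̇_i)` is constant. -/
theorem angular_momentum_conserved
    (n : ℕ) (hn : 2 ≤ n) (κ : ℝ) (hκ : κ ≠ 0)
    (m : Fin n → ℝ) (hm : ∀ i, 0 < m i)
    (q : Fin n → ℝ → ℝ × ℝ × ℝ)
    (hdiff : ∀ (i : Fin n) (t : ℝ),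
      DifferentiableAt ℝ (q i) t ∧ DifferentiableAt ℝ (deriv (q i)) t)
    (hconstr : ∀ (i : Fin n) (t : ℝ), κ * odot (sgn' κ) (q i t) (q i t) = 1)
    (a b : ℝ) (hab : a < b)
    (hnonsing : ∀ t ∈ Set.Ioo a b, ∀ i j : Fin n, i ≠ j →
      κ * odot (sgn' κ) (q i t) (q j t) ≠ 1 ∧ κ * odot (sgn' κ) (q i t) (q j t) ≠ -1)
    (heom : ∀ t ∈ Set.Ioo a b, curvedEOM κ m q t) :
    ∀ t₁ ∈ Set.Ioo a b, ∀ t₂ ∈ Set.Ioo a b,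
      (∑ i : Fin n, m i • otimes (sgn' κ) (q i t₁) (deriv (q i) t₁)) =
      (∑ i : Fin n, m i • otimes (sgn' κ) (q i t₂) (deriv (q i) t₂)) := by
  classical
  set σ : ℝ := sgn' κ with hσ
  set F : ℝ → ℝ × ℝ × ℝ := fun t => ∑ i : Fin n, m i • otimes σ (q i t) (deriv (q i) t)
    with hF
  have key : ∀ t ∈ Set.Ioo a b, HasDerivAt F 0 t := by
    intro t ht
    have hq : ∀ i : Fin n, HasDerivAt (q i) (deriv (q i) t) t :=
      fun i => ((hdiff i t).1).hasDerivAt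
    have hq' : ∀ i : Fin n, HasDerivAt (deriv (q i)) (deriv (deriv (q i)) t) t :=
      fun i => ((hdiff i t).2).hasDerivAt
    have h1 : HasDerivAt F
        (∑ i : Fin n, m i • (otimes σ (deriv (q i) t) (deriv (q i) t)
          + otimes σ (q i t) (deriv (deriv (q i)) t))) t := by
      apply HasDerivAt.fun_sum
      intro i _
      exact (my_hasDerivAt_otimes σ (hq i) (hq' i)).const_smul (m i)
    have hzero : (∑ i : Fin n, m i • (otimes σ (deriv (q i) t) (deriv (q i) t)
        + otimes σ (q i t) (deriv (deriv (q i)) t))) = 0 := by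
      have hstep : (∑ i : Fin n, m i • (otimes σ (deriv (q i) t) (deriv (q i) t)
          + otimes σ (q i t) (deriv (deriv (q i)) t)))
          = ∑ i : Fin n, ∑ j ∈ univ.erase i,
              (m i * (m j * |κ| ^ ((3:ℝ)/2) /
                (σ - σ * (κ * odot σ (q i t) (q j t)) ^ 2) ^ ((3:ℝ)/2)))
                • otimes σ (q i t) (q j t) := by
        refine Finset.sum_congr rfl fun i _ => ?_
        rw [heom t ht i, my_otimes_self, zero_add, my_otimes_sub, my_otimes_smul,
          my_otimes_self, smul_zero, sub_zero, my_otimes_sum, Finset.smul_sum]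
        refine Finset.sum_congr rfl fun j _ => ?_
        rw [my_otimes_smul, my_otimes_sub, my_otimes_smul, my_otimes_self, smul_zero,
          sub_zero, smul_smul]
      rw [hstep]
      set g : Fin n → Fin n → ℝ × ℝ × ℝ := fun i j =>
        (m i * (m j * |κ| ^ ((3:ℝ)/2) /
          (σ - σ * (κ * odot σ (q i t) (q j t)) ^ 2) ^ ((3:ℝ)/2)))
          • otimes σ (q i t) (q j t) with hg
      have hanti : ∀ i j : Fin n, g j i = - g i j := by
        intro i j
        have hco : odot σ (q j t) (q i t) = odot σ (q i t) (q j t) := my_odot_comm _ _ _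
        simp only [hg, hco, my_otimes_anticomm σ (q i t) (q j t), smul_neg]
        congr 1
        ring
      have hswap : (∑ i : Fin n, ∑ j ∈ univ.erase i, g i j)
          = ∑ j : Fin n, ∑ i ∈ univ.erase j, g i j := by
        refine Finset.sum_comm' ?_
        intro i j
        simp [Finset.mem_erase, ne_comm, and_comm, eq_comm]
      have hneg : (∑ i : Fin n, ∑ j ∈ univ.erase i, g i j)
          = - ∑ i : Fin n, ∑ j ∈ univ.erase i, g i j := by
        calc (∑ i : Fin n, ∑ j ∈ univ.erase i, g i j)
            = ∑ j : Fin n, ∑ i ∈ univ.erase j, g i j := hswap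
          _ = ∑ j : Fin n, ∑ i ∈ univ.erase j, - g j i := by
              refine Finset.sum_congr rfl fun j _ => Finset.sum_congr rfl fun i _ => ?_
              rw [hanti]
          _ = - ∑ i : Fin n, ∑ j ∈ univ.erase i, g i j := by
              simp [Finset.sum_neg_distrib]
      have h2 : (∑ i : Fin n, ∑ j ∈ univ.erase i, g i j)
          + (∑ i : Fin n, ∑ j ∈ univ.erase i, g i j) = 0 := by
        nth_rewrite 1 [hneg]; simp
      have h3 : (2:ℝ) • (∑ i : Fin n, ∑ j ∈ univ.erase i, g i j) = 0 := by
        rw [two_smul]; exact h2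
      exact (smul_eq_zero.mp h3).resolve_left two_ne_zero
    rw [hzero] at h1
    exact h1
  have main : ∀ s u : ℝ, s ∈ Set.Ioo a b → u ∈ Set.Ioo a b → s ≤ u → F s = F u := by
    intro s u hs hu hsu
    have hsub : Set.Icc s u ⊆ Set.Ioo a b := fun x hx =>
      ⟨lt_of_lt_of_le hs.1 hx.1, lt_of_le_of_lt hx.2 hu.2⟩
    have hcont : ContinuousOn F (Set.Icc s u) := fun x hx =>
      ((key x (hsub hx)).continuousAt).continuousWithinAt
    have hderiv : ∀ x ∈ Set.Ico s u, HasDerivWithinAt F 0 (Set.Ici x) x := fun x hx =>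
      (key x (hsub ⟨hx.1, le_of_lt hx.2⟩)).hasDerivWithinAt
    exact (constant_of_has_deriv_right_zero hcont hderiv u ⟨hsu, le_rfl⟩).symm
  intro t₁ ht₁ t₂ ht₂
  rcases le_total t₁ t₂ with h | h
  · exact main t₁ t₂ ht₁ ht₂ h
  · exact (main t₂ t₁ ht₂ ht₁ h).symm
end
end
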